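/- arXiv:1711.05157 — 7 statements merged into one kernel-verified Lean document; each statement's English description precedes it below -/
import Mathlib

section
/- Let k ≥ 2 and p ≥ 1, let G be a simple graph whose vertex set is partitioned into V_1, …, V_k each of size p, and let G' be the graph constructed from (G, V_1, …, V_k) as described. Then G has a multicolored clique if and only if G' has an induced forest on k' = 3k + 3·C(k,2) + 1 vertices. -/
/-- Vertex names for the graph `G'` built from a Multicolored Clique instance. -/
inductive MV (k p : ℕ) : Type where
  | z : Fin k → Fin p → MV k p
  | r : Fin k → Fin k → Fin p → Fin p → MV k p
  | ax : Fin k → MV k p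
  | ay : Fin k → MV k p
  | bx : Fin k → Fin k → MV k p
  | byy : Fin k → Fin k → MV k p
  | beta : MV k p

/-- Which vertex names actually occur as vertices of `G'`. -/
def MVValid {k p : ℕ} (G : SimpleGraph (Fin k × Fin p)) : MV k p → Prop
  | MV.r i j s t => i < j ∧ G.Adj (i, s) (j, t)
  | MV.bx i j => i < j
  | MV.byy i j => i < j
  | _ => True

/-- The vertex set of `G'`. -/
abbrev MVert (k p : ℕ) (G : SimpleGraph (Fin k × Fin p)) : Type :=
  {v : MV k p // MVValid G v}

/-- One direction of the adjacency relation of `G'` (it is symmetrized below). -/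
def MVAdj {k p : ℕ} : MV k p → MV k p → Prop
  | MV.z i s, MV.z i' s' => i = i' ∧ s ≠ s'
  | MV.r i j s t, MV.r i' j' s' t' => i = i' ∧ j = j' ∧ (s ≠ s' ∨ t ≠ t')
  | MV.z i h, MV.r i' j' s t => (i = i' ∧ h ≠ s) ∨ (i = j' ∧ h ≠ t)
  | MV.ax i, MV.z i' _ => i = i'
  | MV.ay i, MV.z i' _ => i = i'
  | MV.bx i j, MV.r i' j' _ _ => i = i' ∧ j = j'
  | MV.byy i j, MV.r i' j' _ _ => i = i' ∧ j = j'
  | MV.beta, MV.z _ _ => True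
  | MV.beta, MV.r _ _ _ _ => True
  | _, _ => False

/-- The graph `G'`. -/
def Gp {k p : ℕ} (G : SimpleGraph (Fin k × Fin p)) : SimpleGraph (MVert k p G) :=
  SimpleGraph.fromRel (fun a b => MVAdj a.1 b.1)

/-- The set `Z(i)`. -/
def Zset {k p : ℕ} (G : SimpleGraph (Fin k × Fin p)) (i : Fin k) : Set (MVert k p G) :=
  {v | ∃ s, v.1 = MV.z i s}

/-- The set `R(i,j)`. -/
def Rset {k p : ℕ} (G : SimpleGraph (Fin k × Fin p)) (i j : Fin k) : Set (MVert k p G) :=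
  {v | ∃ s t, v.1 = MV.r i j s t}

/-- The set `Z_{+α}(i)`. -/
def ZAset {k p : ℕ} (G : SimpleGraph (Fin k × Fin p)) (i : Fin k) : Set (MVert k p G) :=
  Zset G i ∪ {v | v.1 = MV.ax i ∨ v.1 = MV.ay i}

/-- The set `R_{+α}(i,j)`. -/
def RAset {k p : ℕ} (G : SimpleGraph (Fin k × Fin p)) (i j : Fin k) : Set (MVert k p G) :=
  Rset G i j ∪ {v | v.1 = MV.bx i j ∨ v.1 = MV.byy i j}

/-- The set `A` of all `α`-vertices. -/
def Aset {k p : ℕ} (G : SimpleGraph (Fin k × Fin p)) : Set (MVert k p G) :=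
  {v | (∃ i, v.1 = MV.ax i ∨ v.1 = MV.ay i) ∨ (∃ i j, v.1 = MV.bx i j ∨ v.1 = MV.byy i j)}

/-- `F` is an induced forest in `G'`: the induced subgraph has no cycle. -/
def IsInducedForest {k p : ℕ} (G : SimpleGraph (Fin k × Fin p))
    (F : Set (MVert k p G)) : Prop :=
  ((Gp G).induce F).IsAcyclic

/-!
In an induced forest of `G'` each gadget `Z_{+α}(i)` or `R_{+α}(i,j)` has at most three
vertices: its clique part is joined to both α-vertices, so any fourth vertex closes a triangle.
With `β` this bounds an induced forest by `k' = 3k + 3·C(k,2) + 1`, and a forest of that size is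
tight everywhere: it contains `β` and a clique vertex `z^i_{s_i}`, resp. `r^{(i,j)}_{s,t}`, of
every gadget. Since `β` is adjacent to all of these, the forest forbids `z^i_{s_i} r^{(i,j)}_{s,t}`
to be an edge, i.e. `s = s_i` and `t = s_j`, so `(s_i)` is a multicolored clique. Conversely a
multicolored clique `h` selects `β`, `z^i_{h i}`, `r^{(i,j)}_{h i, h j}` and all α-vertices,
which span a tree of depth two rooted at `β`.
-/

open SimpleGraph Finset

theorem SimpleGraph.isAcyclic_of_rank {V α : Type*} [LinearOrder α] {H : SimpleGraph V}
    (f : V → α) (hne : ∀ a b, H.Adj a b → f a ≠ f b)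
    (hlower : ∀ a b c, H.Adj a b → H.Adj a c → f b < f a → f c < f a → b = c) :
    H.IsAcyclic := by
  classical
  intro v c hc
  -- a vertex of maximal rank on a cycle would have two distinct lower neighbours on it
  obtain ⟨u, hu, hmax⟩ := c.support.toFinset.exists_max_image f ⟨v, by simp⟩
  rw [List.mem_toFinset] at hu
  have hc' : (c.rotate u hu).IsCycle := hc.rotate hu
  have hlt : ∀ n, H.Adj u ((c.rotate u hu).getVert n) → f ((c.rotate u hu).getVert n) < f u :=
    fun n hadj => (hmax _ (List.mem_toFinset.2 ((c.mem_support_rotate_iff u hu).1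
      ((c.rotate u hu).getVert_mem_support n)))).lt_of_ne (hne _ _ hadj).symm
  have hsnd := (c.rotate u hu).adj_snd hc'.not_nil
  have hpen := ((c.rotate u hu).adj_penultimate hc'.not_nil).symm
  exact hc'.snd_ne_penultimate (hlower u _ _ hsnd hpen (hlt _ hsnd) (hlt _ hpen))

theorem SimpleGraph.card_le_three_of_triangle_free {V : Type*} [DecidableEq V]
    {H : SimpleGraph V} {T C : Finset V}
    (hT : ∀ a ∈ T, ∀ b ∈ T, ∀ c ∈ T, H.Adj a b → H.Adj a c → H.Adj b c → False)
    (hC : ∀ a ∈ C, ∀ b ∈ T, a ≠ b → H.Adj a b) (hTC : #(T \ C) ≤ 2) : #T ≤ 3 := by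
  by_contra! hT4
  have h2 : 1 < #(T ∩ C) := by
    have := card_sdiff_add_card_inter T C
    omega
  obtain ⟨a, ha, b, hb, hab⟩ := one_lt_card.1 h2
  rw [mem_inter] at ha hb
  obtain ⟨c, hc, hca, hcb⟩ : ∃ c ∈ T, c ≠ a ∧ c ≠ b := by
    by_contra! hno
    have : T ⊆ {a, b} := fun c hc => by
      rcases eq_or_ne c a with rfl | h
      · simp
      · simp [hno c hc h]
    have := (card_le_card this).trans card_le_two
    omega
  exact hT a ha.1 b hb.1 c hc (hC a ha.2 b hb.1 hab) (hC a ha.2 c hc hca.symm)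
    (hC b hb.2 c hc hcb.symm)

theorem Finset.card_filter_eq_of_card_eq_sum {α ι : Type*} [Fintype ι] [DecidableEq ι]
    {s : Finset α} {f : α → ι} {B : ι → ℕ} (hle : ∀ i, #{a ∈ s | f a = i} ≤ B i)
    (hs : #s = ∑ i, B i) (i : ι) : #{a ∈ s | f a = i} = B i :=
  (sum_eq_sum_iff_of_le (s := univ) fun i _ => hle i).1
    (by rw [← hs, card_eq_sum_card_fiberwise (f := f) (t := univ) fun _ _ => mem_univ _])
    i (mem_univ i)

theorem IsInducedForest.not_triangle {k p : ℕ} {G : SimpleGraph (Fin k × Fin p)}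
    {F : Set (MVert k p G)} (hF : IsInducedForest G F) {a b c : MVert k p G}
    (ha : a ∈ F) (hb : b ∈ F) (hc : c ∈ F)
    (hab : (Gp G).Adj a b) (hac : (Gp G).Adj a c) (hbc : (Gp G).Adj b c) : False := by
  classical
  refine IsAcyclic.cliqueFree hF le_rfl ({⟨a, ha⟩, ⟨b, hb⟩, ⟨c, hc⟩} : Finset F)
    (is3Clique_triple_iff.2 ⟨?_, ?_, ?_⟩)
  exacts [hab, hac, hbc]

namespace Gp

/-- The gadgets `Z_{+α}(i)` and `R_{+α}(i,j)`, `i < j`. -/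
abbrev Gadget (k : ℕ) : Type := Fin k ⊕ {q : Fin k × Fin k // q.1 < q.2}

theorem card_gadget (k : ℕ) : Fintype.card (Gadget k) = k + k.choose 2 := by
  simp [Fintype.card_subtype, Fintype.card_product_filter_lt]

variable {k p : ℕ} {G : SimpleGraph (Fin k × Fin p)}

/-- Slot `0` of a gadget is its clique part `Z(i)` or `R(i,j)`, slots `1` and `2` are its two
α-vertices; `β` is the only vertex outside all gadgets. -/
def label : MVert k p G → Option (Gadget k × Fin 3)
  | ⟨.z i _, _⟩ => some (.inl i, 0)
  | ⟨.ax i, _⟩ => some (.inl i, 1)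
  | ⟨.ay i, _⟩ => some (.inl i, 2)
  | ⟨.r i j _ _, hv⟩ => some (.inr ⟨(i, j), hv.1⟩, 0)
  | ⟨.bx i j, hv⟩ => some (.inr ⟨(i, j), hv⟩, 1)
  | ⟨.byy i j, hv⟩ => some (.inr ⟨(i, j), hv⟩, 2)
  | ⟨.beta, _⟩ => none

theorem adj_iff {a b : MVert k p G} :
    (Gp G).Adj a b ↔ a ≠ b ∧ (MVAdj a.1 b.1 ∨ MVAdj b.1 a.1) :=
  fromRel_adj ..

theorem eq_of_label_eq {a b : MVert k p G} (hab : label a = label b)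
    (ha : ∀ g, label a ≠ some (g, 0)) : a = b := by
  obtain ⟨x, hx⟩ := a
  obtain ⟨y, hy⟩ := b
  cases x <;> cases y <;> simp_all [label] <;> grind

theorem adj_of_label_eq_core {a b : MVert k p G} {g : Gadget k} (ha : label a = some (g, 0))
    (hb : (label b).map Prod.fst = some g) (hab : a ≠ b) : (Gp G).Adj a b := by
  refine adj_iff.2 ⟨hab, ?_⟩
  have hg : (label b).map Prod.fst = (label a).map Prod.fst := by rw [hb, ha]; rfl
  have hcore : (label a).map Prod.snd = some 0 := by rw [ha]; rfl
  have hne : a.1 ≠ b.1 := fun h => hab (Subtype.ext h)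
  clear ha hb hab
  obtain ⟨x, hx⟩ := a
  obtain ⟨y, hy⟩ := b
  cases x <;> cases y <;> simp_all [label, MVAdj] <;> grind

theorem beta_adj_of_label_eq_core {a : MVert k p G} {g : Gadget k}
    (ha : label a = some (g, 0)) : (Gp G).Adj ⟨.beta, trivial⟩ a := by
  obtain ⟨x, hx⟩ := a
  cases x <;> simp_all [label, adj_iff, MVAdj, Subtype.ext_iff]

theorem label_eq_inl_core {v : MVert k p G} {i : Fin k} :
    label v = some (.inl i, 0) ↔ ∃ s, v.1 = .z i s := by
  obtain ⟨x, hx⟩ := v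
  cases x <;> simp [label, eq_comm]

theorem label_eq_inr_core {v : MVert k p G} {q : {q : Fin k × Fin k // q.1 < q.2}} :
    label v = some (.inr q, 0) ↔ ∃ s t, v.1 = .r q.1.1 q.1.2 s t := by
  obtain ⟨x, hx⟩ := v
  obtain ⟨⟨i, j⟩, hij⟩ := q
  cases x <;> simp [label, eq_comm]

theorem card_filter_label_ne_core_le (S : Finset (MVert k p G)) (g : Gadget k) :
    #{v ∈ S | (label v).map Prod.fst = some g ∧ label v ≠ some (g, 0)} ≤ 2 := by
  classical
  calc _ ≤ #({some (g, 1), some (g, 2)} : Finset (Option (Gadget k × Fin 3))) := by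
        refine card_le_card_of_injOn label (fun v hv => ?_) fun a ha b _ hab => ?_
        · obtain ⟨-, hg, hne⟩ := mem_filter.1 hv
          rcases hl : label v with _ | ⟨g', n⟩
          · simp [hl] at hg
          · simp only [hl, Option.map_some, Option.some.injEq] at hg hne
            subst hg
            fin_cases n <;> simp_all
        · refine eq_of_label_eq hab fun g' hg' => ?_
          obtain ⟨-, hg, hne⟩ := mem_filter.1 ha
          simp only [hg', Option.map_some, Option.some.injEq] at hg
          exact hne (hg ▸ hg')
    _ ≤ 2 := card_le_two

theorem card_filter_gadget_le {F : Set (MVert k p G)} (hF : IsInducedForest G F)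
    {S : Finset (MVert k p G)} (hS : ∀ v ∈ S, v ∈ F) (o : Option (Gadget k)) :
    #{v ∈ S | (label v).map Prod.fst = o} ≤ o.elim 1 fun _ => 3 := by
  classical
  cases o with
  | none =>
    refine card_le_one.2 fun a ha b hb => ?_
    simp only [mem_filter, Option.map_eq_none_iff] at ha hb
    exact eq_of_label_eq (ha.2.trans hb.2.symm) (by simp [ha.2])
  | some g =>
    refine card_le_three_of_triangle_free (H := Gp G) (C := {v ∈ S | label v = some (g, 0)})
      (fun a ha b hb c hc => hF.not_triangle (hS a (mem_filter.1 ha).1)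
        (hS b (mem_filter.1 hb).1) (hS c (mem_filter.1 hc).1))
      (fun a ha b hb hab => adj_of_label_eq_core (mem_filter.1 ha).2 (mem_filter.1 hb).2 hab)
      ((card_le_card fun v hv => ?_).trans (card_filter_label_ne_core_le S g))
    simp only [mem_sdiff, mem_filter] at hv ⊢
    tauto

theorem sum_gadget_bound (k : ℕ) :
    ∑ o : Option (Gadget k), (o.elim 1 fun _ => 3) = 3 * k + 3 * k.choose 2 + 1 := by
  simp only [Fintype.sum_option, Option.elim, sum_const, card_univ, card_gadget, smul_eq_mul]
  ring

theorem beta_mem_and_exists_core_mem {F : Set (MVert k p G)} (hF : IsInducedForest G F)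
    (hcard : F.ncard = 3 * k + 3 * k.choose 2 + 1) :
    (⟨.beta, trivial⟩ : MVert k p G) ∈ F ∧ ∀ g : Gadget k, ∃ v ∈ F, label v = some (g, 0) := by
  classical
  have hfin : F.Finite := Set.finite_of_ncard_pos (by omega)
  have hS : ∀ v ∈ hfin.toFinset, v ∈ F := fun v => hfin.mem_toFinset.1
  have hfiber := card_filter_eq_of_card_eq_sum (card_filter_gadget_le hF hS)
    (by rw [← Set.ncard_eq_toFinset_card _ hfin, hcard, sum_gadget_bound])
  constructor
  · obtain ⟨v, hv⟩ := card_pos.1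
      (show 0 < #{v ∈ hfin.toFinset | (label v).map Prod.fst = none} by
        rw [hfiber]
        exact one_pos)
    simp only [mem_filter, Option.map_eq_none_iff] at hv
    have hβ : v = ⟨.beta, trivial⟩ := eq_of_label_eq (b := ⟨.beta, trivial⟩) hv.2 (by simp [hv.2])
    exact hβ ▸ hS v hv.1
  · intro g
    by_contra! hno
    have hsub : {v ∈ hfin.toFinset | (label v).map Prod.fst = some g} ⊆
        {v ∈ hfin.toFinset | (label v).map Prod.fst = some g ∧ label v ≠ some (g, 0)} :=
      fun v hv => by
        simp only [mem_filter] at hv ⊢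
        exact ⟨hv.1, hv.2, hno v (hS v hv.1)⟩
    have := (card_le_card hsub).trans (card_filter_label_ne_core_le _ g)
    rw [hfiber (some g)] at this
    norm_num at this

theorem exists_multicolored_clique_of_isInducedForest {F : Set (MVert k p G)}
    (hF : IsInducedForest G F) (hcard : F.ncard = 3 * k + 3 * k.choose 2 + 1) :
    ∃ h : Fin k → Fin p, ∀ i j : Fin k, i ≠ j → G.Adj (i, h i) (j, h j) := by
  obtain ⟨hβ, hcore⟩ := beta_mem_and_exists_core_mem hF hcard
  have hz : ∀ i, ∃ s, (⟨.z i s, trivial⟩ : MVert k p G) ∈ F := fun i => by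
    obtain ⟨⟨x, hx⟩, hxF, hl⟩ := hcore (.inl i)
    obtain ⟨s, rfl⟩ := label_eq_inl_core.1 hl
    exact ⟨s, hxF⟩
  choose h hh using hz
  have hcore_adj {a b : MVert k p G} {g g' : Gadget k} (ha : a ∈ F) (hb : b ∈ F)
      (hga : label a = some (g, 0)) (hgb : label b = some (g', 0)) : ¬ (Gp G).Adj a b :=
    hF.not_triangle hβ ha hb (beta_adj_of_label_eq_core hga) (beta_adj_of_label_eq_core hgb)
  have hclique : ∀ i j, i < j → G.Adj (i, h i) (j, h j) := fun i j hij => by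
    obtain ⟨⟨x, hx⟩, hxF, hl⟩ := hcore (.inr ⟨(i, j), hij⟩)
    obtain ⟨s, t, rfl⟩ := label_eq_inr_core.1 hl
    have hzr (l : Fin k) : ¬ MVAdj (.z l (h l)) (.r i j s t) := fun hadj =>
      hcore_adj (hh l) hxF (label_eq_inl_core.2 ⟨_, rfl⟩) hl
        (adj_iff.2 ⟨by simp [Subtype.ext_iff], .inl hadj⟩)
    have hs : s = h i := by simpa [MVAdj, eq_comm, hij.ne] using hzr i
    have ht : t = h j := by simpa [MVAdj, eq_comm, hij.ne] using hzr j
    exact hs ▸ ht ▸ hx.2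
  refine ⟨h, fun i j hij => ?_⟩
  rcases hij.lt_or_gt with hij | hji
  exacts [hclique i j hij, (hclique j i hji).symm]

def cliqueVertex (h : Fin k → Fin p) (hcl : ∀ i j : Fin k, i ≠ j → G.Adj (i, h i) (j, h j)) :
    Option (Gadget k × Fin 3) → MVert k p G
  | none => ⟨.beta, trivial⟩
  | some (.inl i, 0) => ⟨.z i (h i), trivial⟩
  | some (.inl i, 1) => ⟨.ax i, trivial⟩
  | some (.inl i, 2) => ⟨.ay i, trivial⟩
  | some (.inr q, 0) => ⟨.r q.1.1 q.1.2 (h q.1.1) (h q.1.2), q.2, hcl _ _ q.2.ne⟩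
  | some (.inr q, 1) => ⟨.bx q.1.1 q.1.2, q.2⟩
  | some (.inr q, 2) => ⟨.byy q.1.1 q.1.2, q.2⟩

def IsSelected (h : Fin k → Fin p) : MV k p → Prop
  | .z i s => s = h i
  | .r i j s t => s = h i ∧ t = h j
  | _ => True

def level : MV k p → ℕ
  | .beta => 0
  | .z _ _ | .r _ _ _ _ => 1
  | _ => 2

def parent (h : Fin k → Fin p) : MV k p → MV k p
  | .ax i | .ay i => .z i (h i)
  | .bx i j | .byy i j => .r i j (h i) (h j)
  | _ => .beta

theorem level_ne_of_mvAdj {h : Fin k → Fin p} {x y : MV k p} (hx : IsSelected h x)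
    (hy : IsSelected h y) (hxy : MVAdj x y) : level x ≠ level y := by
  cases x <;> cases y <;> simp_all [MVAdj, level, IsSelected] <;> grind

theorem eq_parent_of_mvAdj {h : Fin k → Fin p} {x y : MV k p} (hx : IsSelected h x)
    (hy : IsSelected h y) (hxy : MVAdj x y ∨ MVAdj y x) (hlt : level y < level x) :
    y = parent h x := by
  cases x <;> cases y <;> simp_all [MVAdj, level, IsSelected, parent]

section CliqueForest

variable {h : Fin k → Fin p} (hcl : ∀ i j : Fin k, i ≠ j → G.Adj (i, h i) (j, h j))

theorem leftInverse_label_cliqueVertex : Function.LeftInverse label (cliqueVertex h hcl) := by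
  intro l
  rcases l with _ | ⟨i | q, n⟩ <;> try rfl
  all_goals fin_cases n <;> rfl

theorem isSelected_cliqueVertex (l : Option (Gadget k × Fin 3)) :
    IsSelected h (cliqueVertex h hcl l).1 := by
  rcases l with _ | ⟨i | q, n⟩ <;> try trivial
  all_goals fin_cases n <;> simp [cliqueVertex, IsSelected]

theorem isInducedForest_range_cliqueVertex :
    IsInducedForest G (Set.range (cliqueVertex h hcl)) := by
  have hsel (v : Set.range (cliqueVertex h hcl)) : IsSelected h v.1.1 := by
    obtain ⟨_, l, rfl⟩ := v
    exact isSelected_cliqueVertex hcl l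
  refine isAcyclic_of_rank (fun v => level v.1.1) (fun a b hab => ?_)
    fun a b c hab hac hb hc => ?_
  · rcases (adj_iff.1 hab).2 with hab | hba
    exacts [level_ne_of_mvAdj (hsel a) (hsel b) hab,
      (level_ne_of_mvAdj (hsel b) (hsel a) hba).symm]
  · have hb := eq_parent_of_mvAdj (hsel a) (hsel b) (adj_iff.1 hab).2 hb
    have hc := eq_parent_of_mvAdj (hsel a) (hsel c) (adj_iff.1 hac).2 hc
    exact Subtype.ext (Subtype.ext (hb.trans hc.symm))

theorem ncard_range_cliqueVertex :
    (Set.range (cliqueVertex h hcl)).ncard = 3 * k + 3 * k.choose 2 + 1 := by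
  rw [Set.ncard_range_of_injective (leftInverse_label_cliqueVertex hcl).injective,
    Nat.card_eq_fintype_card, Fintype.card_option, Fintype.card_prod, card_gadget,
    Fintype.card_fin]
  ring

end CliqueForest

end Gp

theorem stmt0_general (k p : ℕ) (G : SimpleGraph (Fin k × Fin p)) :
    (∃ h : Fin k → Fin p, ∀ i j : Fin k, i ≠ j → G.Adj (i, h i) (j, h j)) ↔
      ∃ F : Set (MVert k p G),
        F.ncard = 3 * k + 3 * Nat.choose k 2 + 1 ∧ IsInducedForest G F := by
  constructor
  · rintro ⟨h, hcl⟩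
    exact ⟨_, Gp.ncard_range_cliqueVertex hcl, Gp.isInducedForest_range_cliqueVertex hcl⟩
  · rintro ⟨F, hcard, hF⟩
    exact Gp.exists_multicolored_clique_of_isInducedForest hF hcard

/-- `G` has a multicolored clique iff `G'` has an induced forest on
`k' = 3k + 3·C(k,2) + 1` vertices. -/
theorem stmt0 (k p : ℕ) (hk : 2 ≤ k) (hp : 1 ≤ p) (G : SimpleGraph (Fin k × Fin p)) :
    (∃ h : Fin k → Fin p, ∀ i j : Fin k, i ≠ j → G.Adj (i, h i) (j, h j)) ↔
      ∃ F : Set (MVert k p G),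
        F.ncard = 3 * k + 3 * Nat.choose k 2 + 1 ∧ IsInducedForest G F :=
  stmt0_general k p G
end

section
/- If {v^1_{h_1}, …, v^k_{h_k}} (with h_i ∈ [p] for each i) is a multicolored clique in G, then the set F = {z^1_{h_1}, …, z^k_{h_k}} ∪ {r^{(i,j)}_{h_i,h_j} : 1 ≤ i < j ≤ k} ∪ A ∪ {β} has exactly k' = 3k + 3·C(k,2) + 1 vertices and the induced subgraph G'[F] is a tree (connected and acyclic); in particular G' has an induced forest on k' vertices. -/
/-!
The chosen centres `z^i_{h_i}` and `r^{(i,j)}_{h_i,h_j}` are pairwise non-adjacent in `G'`, since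
`z^i_{h_i}` misses exactly those vertices of `R(i,j)` or `R(j,i)` whose coordinate at `i` is `h_i`.
So inside `F` the centres are adjacent only to `β`, and each `α`-vertex only to the centre of its
own block: `G'[F]` is the graph of a parent map (leaf ↦ centre ↦ `β`) on a tree of height two,
and any graph of a parent map that strictly decreases a depth function is a tree.
-/

namespace SimpleGraph

variable {V : Type*}

def parentGraph (root : V) (parent : V → V) : SimpleGraph V :=
  fromRel fun u v => u ≠ root ∧ v = parent u

variable {root : V} {parent : V → V} (depth : V → ℕ)

theorem parentGraph_connected (hdepth : ∀ v, v ≠ root → depth (parent v) < depth v) :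
    (parentGraph root parent).Connected := by
  have reach : ∀ n, ∀ v, depth v = n → (parentGraph root parent).Reachable v root := by
    intro n
    induction n using Nat.strong_induction_on with
    | _ n ih =>
      rintro v rfl
      by_cases hv : v = root
      · exact hv ▸ .rfl
      have hlt := hdepth v hv
      have hadj : (parentGraph root parent).Adj v (parent v) :=
        ⟨fun e => hlt.ne (congrArg depth e.symm), .inl ⟨hv, rfl⟩⟩
      exact hadj.reachable.trans (ih _ hlt _ rfl)
  have : Nonempty V := ⟨root⟩
  exact ⟨fun u v => (reach _ u rfl).trans (reach _ v rfl).symm⟩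

theorem parentGraph_isAcyclic (hdepth : ∀ v, v ≠ root → depth (parent v) < depth v) :
    (parentGraph root parent).IsAcyclic := by
  classical
  intro x c hc
  obtain ⟨u, hu, hmax⟩ := c.support.toFinset.exists_max_image depth ⟨x, by simp⟩
  rw [List.mem_toFinset] at hu
  set c' := c.rotate u hu
  have hc' : c'.IsCycle := (Walk.isCycle_rotate hu).mpr hc
  -- `u` has maximal depth on the cycle, so none of its cycle-neighbours is a child of `u`
  have eq_parent : ∀ w ∈ c'.support, (parentGraph root parent).Adj u w → w = parent u := by
    rintro w hw ⟨-, (⟨-, rfl⟩ | ⟨hwr, rfl⟩)⟩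
    · rfl
    · exact absurd (hmax w (by simpa [c'] using hw)) (hdepth w hwr).not_ge
  exact hc'.snd_ne_penultimate <|
    (eq_parent _ (c'.getVert_mem_support 1) (c'.adj_snd hc'.not_nil)).trans
      (eq_parent _ (c'.getVert_mem_support _) (c'.adj_penultimate hc'.not_nil).symm).symm

theorem isTree_parentGraph (hdepth : ∀ v, v ≠ root → depth (parent v) < depth v) :
    (parentGraph root parent).IsTree :=
  ⟨parentGraph_connected depth hdepth, parentGraph_isAcyclic depth hdepth⟩

end SimpleGraph

section TwoLevel

variable {B C : Type*}

def twoLevelParent : Option (B × Option C) → Option (B × Option C)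
  | some (b, some _) => some (b, none)
  | _ => none

def twoLevelDepth : Option (B × Option C) → ℕ
  | none => 0
  | some (_, none) => 1
  | some (_, some _) => 2

lemma twoLevelDepth_twoLevelParent_lt :
    ∀ x : Option (B × Option C), x ≠ none → twoLevelDepth (twoLevelParent x) < twoLevelDepth x
  | some (_, none), _ => Nat.zero_lt_one
  | some (_, some _), _ => Nat.one_lt_two

end TwoLevel

namespace MV

variable {k p : ℕ}

abbrev Block (k : ℕ) : Type := Fin k ⊕ {q : Fin k × Fin k // q.1 < q.2}

/-- A block is a colour `i` or a pair `i < j`. The index `none` stands for `β`, `some (b, none)`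
for the centre `z^i_{h_i}` or `r^{(i,j)}_{h_i,h_j}` of the block `b`, and `some (b, some false)`,
`some (b, some true)` for its two `α`-vertices. -/
abbrev CliqueTreeIndex (k : ℕ) : Type := Option (Block k × Option Bool)

def cliqueTreeName (h : Fin k → Fin p) : CliqueTreeIndex k → MV k p
  | none => beta
  | some (.inl i, none) => z i (h i)
  | some (.inl i, some false) => ax i
  | some (.inl i, some true) => ay i
  | some (.inr q, none) => r q.1.1 q.1.2 (h q.1.1) (h q.1.2)
  | some (.inr q, some false) => bx q.1.1 q.1.2
  | some (.inr q, some true) => byy q.1.1 q.1.2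

lemma cliqueTreeName_injective (h : Fin k → Fin p) : (cliqueTreeName h).Injective := by
  intro x y
  rcases x with _ | ⟨i | ⟨⟨i, j⟩, hij⟩, _ | _ | _⟩ <;>
  rcases y with _ | ⟨i' | ⟨⟨i', j'⟩, hij'⟩, _ | _ | _⟩ <;>
  simp +contextual [cliqueTreeName]

lemma mvAdj_cliqueTreeName_iff (h : Fin k → Fin p) (x y : CliqueTreeIndex k) :
    MVAdj (cliqueTreeName h x) (cliqueTreeName h y) ∨
        MVAdj (cliqueTreeName h y) (cliqueTreeName h x) ↔
      (x ≠ none ∧ y = twoLevelParent x) ∨ (y ≠ none ∧ x = twoLevelParent y) := by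
  rcases x with _ | ⟨i | ⟨⟨i, j⟩, hij⟩, _ | _ | _⟩ <;>
  rcases y with _ | ⟨i' | ⟨⟨i', j'⟩, hij'⟩, _ | _ | _⟩ <;>
  simp [cliqueTreeName, twoLevelParent, MVAdj, eq_comm] <;> grind

variable {G : SimpleGraph (Fin k × Fin p)} {h : Fin k → Fin p}

lemma mvValid_cliqueTreeName (hcl : ∀ i j : Fin k, i ≠ j → G.Adj (i, h i) (j, h j)) :
    ∀ x, MVValid G (cliqueTreeName h x)
  | none | some (.inl _, none) | some (.inl _, some false) | some (.inl _, some true) => trivial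
  | some (.inr q, none) => ⟨q.2, hcl _ _ q.2.ne⟩
  | some (.inr q, some false) | some (.inr q, some true) => q.2

def cliqueTreeEmbedding (hcl : ∀ i j : Fin k, i ≠ j → G.Adj (i, h i) (j, h j)) :
    SimpleGraph.parentGraph (none : CliqueTreeIndex k) twoLevelParent ↪g Gp G where
  toFun x := ⟨cliqueTreeName h x, mvValid_cliqueTreeName hcl x⟩
  inj' _ _ hxy := cliqueTreeName_injective h (congrArg Subtype.val hxy)
  map_rel_iff' {x y} := by
    change (Gp G).Adj ⟨cliqueTreeName h x, _⟩ ⟨cliqueTreeName h y, _⟩ ↔ _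
    simp [Gp, SimpleGraph.parentGraph, (cliqueTreeName_injective h).eq_iff,
      mvAdj_cliqueTreeName_iff]

lemma range_cliqueTreeEmbedding (hcl : ∀ i j : Fin k, i ≠ j → G.Adj (i, h i) (j, h j)) :
    Set.range (cliqueTreeEmbedding hcl) =
      {v | ∃ i, v.1 = MV.z i (h i)} ∪ {v | ∃ i j : Fin k, i < j ∧ v.1 = MV.r i j (h i) (h j)} ∪
        Aset G ∪ {v | v.1 = MV.beta} := by
  ext ⟨v, hv⟩
  constructor
  · rintro ⟨x, hx⟩
    obtain rfl : cliqueTreeName h x = v := congrArg Subtype.val hx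
    rcases x with _ | ⟨i | ⟨⟨i, j⟩, hij⟩, _ | _ | _⟩ <;>
      simp_all [cliqueTreeName, Aset]
  · rintro (((⟨i, rfl⟩ | ⟨i, j, hij, rfl⟩) | (⟨i, rfl | rfl⟩ | ⟨i, j, rfl | rfl⟩)) | rfl)
    exacts [⟨some (.inl i, none), rfl⟩, ⟨some (.inr ⟨(i, j), hij⟩, none), rfl⟩,
      ⟨some (.inl i, some false), rfl⟩, ⟨some (.inl i, some true), rfl⟩,
      ⟨some (.inr ⟨(i, j), hv⟩, some false), rfl⟩, ⟨some (.inr ⟨(i, j), hv⟩, some true), rfl⟩,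
      ⟨none, rfl⟩]

lemma card_cliqueTreeIndex (k : ℕ) :
    Nat.card (CliqueTreeIndex k) = 3 * k + 3 * k.choose 2 + 1 := by
  rw [Nat.card_eq_fintype_card]
  simp only [Fintype.card_option, Fintype.card_prod, Fintype.card_sum, Fintype.card_fin,
    Fintype.card_bool, Fintype.card_subtype, Fintype.card_product_filter_lt]
  ring

end MV

theorem stmt1_general (k p : ℕ) (G : SimpleGraph (Fin k × Fin p))
    (h : Fin k → Fin p) (hcl : ∀ i j : Fin k, i ≠ j → G.Adj (i, h i) (j, h j)) :
    ∀ F : Set (MVert k p G),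
      F = {v | ∃ i, v.1 = MV.z i (h i)} ∪
          {v | ∃ i j : Fin k, i < j ∧ v.1 = MV.r i j (h i) (h j)} ∪
          Aset G ∪ {v | v.1 = MV.beta} →
      F.ncard = 3 * k + 3 * Nat.choose k 2 + 1 ∧ ((Gp G).induce F).IsTree := by
  rintro F rfl
  rw [← MV.range_cliqueTreeEmbedding hcl]
  refine ⟨?_, ?_⟩
  · rw [Set.ncard_range_of_injective (MV.cliqueTreeEmbedding hcl).injective,
      MV.card_cliqueTreeIndex]
  · exact (MV.cliqueTreeEmbedding hcl).isoInduceRange.isTree_iff.mp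
      (SimpleGraph.isTree_parentGraph twoLevelDepth twoLevelDepth_twoLevelParent_lt)

/-- from a multicolored clique one obtains a set `F` of exactly
`k' = 3k + 3·C(k,2) + 1` vertices inducing a tree in `G'`. -/
theorem stmt1 (k p : ℕ) (hk : 2 ≤ k) (hp : 1 ≤ p) (G : SimpleGraph (Fin k × Fin p))
    (h : Fin k → Fin p) (hcl : ∀ i j : Fin k, i ≠ j → G.Adj (i, h i) (j, h j)) :
    ∀ F : Set (MVert k p G),
      F = {v | ∃ i, v.1 = MV.z i (h i)} ∪
          {v | ∃ i j : Fin k, i < j ∧ v.1 = MV.r i j (h i) (h j)} ∪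
          Aset G ∪ {v | v.1 = MV.beta} →
      F.ncard = 3 * k + 3 * Nat.choose k 2 + 1 ∧ ((Gp G).induce F).IsTree :=
  stmt1_general k p G h hcl
end

section
/- If {v^1_{h_1}, …, v^k_{h_k}} (with h_i ∈ [p] for each i) is a multicolored clique in G, then the set I = {z^1_{h_1}, …, z^k_{h_k}} ∪ {r^{(i,j)}_{h_i,h_j} : 1 ≤ i < j ≤ k} is an independent set in G' of size k + C(k,2). -/
/-- Equiv between ordered pairs and a sigma type for counting. -/
def pairEquiv (k : ℕ) : {q : Fin k × Fin k // q.1 < q.2} ≃ Σ j : Fin k, Fin j.val where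
  toFun q := ⟨q.1.2, ⟨q.1.1, q.2⟩⟩
  invFun x := ⟨(⟨x.2.1, lt_trans x.2.isLt x.1.isLt⟩, x.1), x.2.isLt⟩
  left_inv q := by ext <;> rfl
  right_inv x := by rcases x with ⟨j, i⟩; rfl

theorem card_ordered_pairs (k : ℕ) :
    Nat.card {q : Fin k × Fin k // q.1 < q.2} = Nat.choose k 2 := by
  rw [Nat.card_eq_fintype_card, Fintype.card_congr (pairEquiv k), Fintype.card_sigma]
  simp only [Fintype.card_fin, Nat.choose_two_right]
  rw [show (∑ x : Fin k, (x : ℕ)) = ∑ i ∈ Finset.range k, i from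
    Fin.sum_univ_eq_sum_range (fun i => i) k, Finset.sum_range_id]

/-- from a multicolored clique one obtains an independent set `I` of size
`k + C(k,2)` in `G'`. -/
theorem stmt2 (k p : ℕ) (hk : 2 ≤ k) (hp : 1 ≤ p) (G : SimpleGraph (Fin k × Fin p))
    (h : Fin k → Fin p) (hcl : ∀ i j : Fin k, i ≠ j → G.Adj (i, h i) (j, h j)) :
    ∀ I : Set (MVert k p G),
      I = {v | ∃ i, v.1 = MV.z i (h i)} ∪
          {v | ∃ i j : Fin k, i < j ∧ v.1 = MV.r i j (h i) (h j)} →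
      (I.Pairwise fun a b => ¬ (Gp G).Adj a b) ∧ I.ncard = k + Nat.choose k 2 := by
  intro I hI
  constructor
  · intro a ha b hb hab hadj
    rw [hI] at ha hb
    rw [Gp, SimpleGraph.fromRel_adj] at hadj
    obtain ⟨hne, hadj⟩ := hadj
    rcases ha with ⟨i, hz⟩ | ⟨i, j, hij, hr⟩
    · rcases hb with ⟨i', hz'⟩ | ⟨i', j', hij', hr'⟩
      · rw [hz, hz'] at hadj; simp only [MVAdj] at hadj
        rcases hadj with ⟨rfl, hne'⟩ | ⟨rfl, hne'⟩ <;> exact hne' rfl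
      · rw [hz, hr'] at hadj; simp only [MVAdj] at hadj
        rcases hadj with (⟨rfl, hne'⟩ | ⟨rfl, hne'⟩) | hadj
        · exact hne' rfl
        · exact hne' rfl
        · exact hadj
    · rcases hb with ⟨i', hz'⟩ | ⟨i', j', hij', hr'⟩
      · rw [hr, hz'] at hadj; simp only [MVAdj] at hadj
        rcases hadj with hadj | (⟨rfl, hne'⟩ | ⟨rfl, hne'⟩)
        · exact hadj
        · exact hne' rfl
        · exact hne' rfl
      · rw [hr, hr'] at hadj; simp only [MVAdj] at hadj
        rcases hadj with ⟨rfl, rfl, hne' | hne'⟩ | ⟨rfl, rfl, hne' | hne'⟩ <;>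
          exact hne' rfl
  · set fz : Fin k → MVert k p G := fun i => ⟨MV.z i (h i), trivial⟩ with hfz
    set fr : {q : Fin k × Fin k // q.1 < q.2} → MVert k p G :=
      fun q => ⟨MV.r q.1.1 q.1.2 (h q.1.1) (h q.1.2), q.2, hcl _ _ (ne_of_lt q.2)⟩ with hfr
    have hIeq : I = Set.range fz ∪ Set.range fr := by
      rw [hI]; ext v
      constructor
      · rintro (⟨i, hv⟩ | ⟨i, j, hij, hv⟩)
        · exact Or.inl ⟨i, Subtype.ext hv.symm⟩
        · exact Or.inr ⟨⟨(i, j), hij⟩, Subtype.ext hv.symm⟩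
      · rintro (⟨i, rfl⟩ | ⟨q, rfl⟩)
        · exact Or.inl ⟨i, rfl⟩
        · exact Or.inr ⟨q.1.1, q.1.2, q.2, rfl⟩
    have hdisj : Disjoint (Set.range fz) (Set.range fr) := by
      rw [Set.disjoint_left]
      rintro v ⟨i, rfl⟩ ⟨q, hq⟩
      have := congrArg Subtype.val hq
      simp [hfz, hfr] at this
    have hzinj : Function.Injective fz := by
      intro a b hab
      simp only [hfz, Subtype.ext_iff, MV.z.injEq] at hab
      exact hab.1
    have hrinj : Function.Injective fr := by
      intro a b hab
      simp only [hfr, Subtype.ext_iff, MV.r.injEq] at hab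
      exact Subtype.ext (Prod.ext hab.1 hab.2.1)
    rw [hIeq, Set.ncard_union_eq hdisj (Set.finite_range fz) (Set.finite_range fr)]
    rw [← Set.image_univ, Set.ncard_image_of_injective _ hzinj,
      ← Set.image_univ (f := fr), Set.ncard_image_of_injective _ hrinj,
      Set.ncard_univ, Set.ncard_univ, Nat.card_eq_fintype_card, Fintype.card_fin,
      card_ordered_pairs]
end

section
/- Let F be an induced forest in G'. If F contains two vertices from Z(i) for some i ∈ [k], then F contains no vertex from {α^i_x, α^i_y}; likewise, if F contains two vertices from R(i,j) for some 1 ≤ i < j ≤ k, then F contains no vertex from {α^{(i,j)}_x, α^{(i,j)}_y}. -/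
/-! Each `α`-vertex is adjacent to every vertex of the clique `Z(i)` (resp. `R(i,j)`), so together
with two vertices of that clique it spans a triangle, which no forest contains. -/

namespace SimpleGraph

variable {V : Type*} {H : SimpleGraph V}

lemma IsAcyclic.not_adj_of_adj_of_adj (h : H.IsAcyclic) {a b c : V} (hab : H.Adj a b)
    (hbc : H.Adj b c) : ¬ H.Adj a c := by
  classical
  intro hac
  exact h.cliqueFree le_rfl {a, b, c} (is3Clique_triple_iff.2 ⟨hab, hac, hbc⟩)

lemma notMem_of_isAcyclic_induce_of_isClique {F S : Set V} (hF : (H.induce F).IsAcyclic)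
    (hS : H.IsClique S) {v : V} (hv : ∀ w ∈ S, H.Adj v w) {a b : V} (ha : a ∈ F ∩ S)
    (hb : b ∈ F ∩ S) (hab : a ≠ b) : v ∉ F := fun hvF =>
  hF.not_adj_of_adj_of_adj (a := ⟨a, ha.1⟩) (b := ⟨b, hb.1⟩) (c := ⟨v, hvF⟩)
    (hS ha.2 hb.2 hab) (hv b hb.2).symm (hv a ha.2).symm

end SimpleGraph

section

variable {k p : ℕ} {G : SimpleGraph (Fin k × Fin p)}

lemma Gp_adj_iff {a b : MVert k p G} :
    (Gp G).Adj a b ↔ a ≠ b ∧ (MVAdj a.1 b.1 ∨ MVAdj b.1 a.1) :=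
  SimpleGraph.fromRel_adj _ _ _

lemma isClique_Zset (i : Fin k) : (Gp G).IsClique (Zset G i) := by
  rintro a ⟨s, has⟩ b ⟨t, hbt⟩ hab
  refine Gp_adj_iff.2 ⟨hab, Or.inl ?_⟩
  rw [has, hbt]
  exact ⟨rfl, fun hst => hab (Subtype.ext (by rw [has, hbt, hst]))⟩

lemma isClique_Rset (i j : Fin k) : (Gp G).IsClique (Rset G i j) := by
  rintro a ⟨s, t, has⟩ b ⟨s', t', hbt⟩ hab
  refine Gp_adj_iff.2 ⟨hab, Or.inl ?_⟩
  rw [has, hbt]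
  refine ⟨rfl, rfl, not_and_or.1 fun ⟨hs, ht⟩ => hab (Subtype.ext ?_)⟩
  rw [has, hbt, hs, ht]

lemma Gp_adj_of_mem_Zset {i : Fin k} {v w : MVert k p G} (hv : v.1 = MV.ax i ∨ v.1 = MV.ay i)
    (hw : w ∈ Zset G i) : (Gp G).Adj v w := by
  obtain ⟨s, hws⟩ := hw
  refine Gp_adj_iff.2 ⟨fun h => ?_, Or.inl ?_⟩ <;> rcases hv with hv | hv
  all_goals first | (rw [h, hws] at hv; cases hv) | (rw [hv, hws]; rfl)

lemma Gp_adj_of_mem_Rset {i j : Fin k} {v w : MVert k p G}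
    (hv : v.1 = MV.bx i j ∨ v.1 = MV.byy i j) (hw : w ∈ Rset G i j) : (Gp G).Adj v w := by
  obtain ⟨s, t, hws⟩ := hw
  refine Gp_adj_iff.2 ⟨fun h => ?_, Or.inl ?_⟩ <;> rcases hv with hv | hv
  all_goals first | (rw [h, hws] at hv; cases hv) | (rw [hv, hws]; exact ⟨rfl, rfl⟩)

end

theorem stmt8_general (k p : ℕ) (G : SimpleGraph (Fin k × Fin p))
    (F : Set (MVert k p G)) (hF : IsInducedForest G F) :
    (∀ i : Fin k, ∀ a b : MVert k p G, a ∈ F ∩ Zset G i → b ∈ F ∩ Zset G i → a ≠ b →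
      ∀ v ∈ F, v.1 ≠ MV.ax i ∧ v.1 ≠ MV.ay i) ∧
    (∀ i j : Fin k, i < j → ∀ a b : MVert k p G,
      a ∈ F ∩ Rset G i j → b ∈ F ∩ Rset G i j → a ≠ b →
      ∀ v ∈ F, v.1 ≠ MV.bx i j ∧ v.1 ≠ MV.byy i j) := by
  constructor
  · intro i a b ha hb hab v hvF
    rw [← not_or]
    exact fun hv => SimpleGraph.notMem_of_isAcyclic_induce_of_isClique hF (isClique_Zset i)
      (fun _ => Gp_adj_of_mem_Zset hv) ha hb hab hvF
  · intro i j _ a b ha hb hab v hvF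
    rw [← not_or]
    exact fun hv => SimpleGraph.notMem_of_isAcyclic_induce_of_isClique hF (isClique_Rset i j)
      (fun _ => Gp_adj_of_mem_Rset hv) ha hb hab hvF

/-- if an induced forest in `G'` contains two vertices of `Z(i)`, it contains
neither `α^i_x` nor `α^i_y`; likewise for `R(i,j)` and `α^{(i,j)}_x, α^{(i,j)}_y`. -/
theorem stmt8 (k p : ℕ) (hk : 2 ≤ k) (hp : 1 ≤ p) (G : SimpleGraph (Fin k × Fin p))
    (F : Set (MVert k p G)) (hF : IsInducedForest G F) :
    (∀ i : Fin k, ∀ a b : MVert k p G, a ∈ F ∩ Zset G i → b ∈ F ∩ Zset G i → a ≠ b →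
      ∀ v ∈ F, v.1 ≠ MV.ax i ∧ v.1 ≠ MV.ay i) ∧
    (∀ i j : Fin k, i < j → ∀ a b : MVert k p G,
      a ∈ F ∩ Rset G i j → b ∈ F ∩ Rset G i j → a ≠ b →
      ∀ v ∈ F, v.1 ≠ MV.bx i j ∧ v.1 ≠ MV.byy i j) :=
  stmt8_general k p G F hF
end

section
/- Let F be an induced forest in G'. If F contains three vertices from Z_{+α}(i) for some i ∈ [k], then these three vertices include both α^i_x and α^i_y; likewise, if F contains three vertices from R_{+α}(i,j) for some 1 ≤ i < j ≤ k, then these include both α^{(i,j)}_x and α^{(i,j)}_y. -/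
lemma tri_not_acyclic {V : Type*} {H : SimpleGraph V} (hH : H.IsAcyclic) {a b c : V}
    (hab : H.Adj a b) (hbc : H.Adj b c) (hca : H.Adj c a) : False := by
  have hcyc : ((hab.toWalk.append hbc.toWalk).append hca.toWalk).IsCycle := by
    simp [SimpleGraph.Walk.isCycle_def, SimpleGraph.Walk.isTrail_def,
      SimpleGraph.Adj.toWalk, hab.ne, hbc.ne, hca.ne, hab.ne', hbc.ne', hca.ne',
      Ne.symm]
  exact hH _ hcyc

lemma triF {k p : ℕ} {G : SimpleGraph (Fin k × Fin p)} {F : Set (MVert k p G)}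
    (hF : IsInducedForest G F) {a b c : MVert k p G}
    (ha : a ∈ F) (hb : b ∈ F) (hc : c ∈ F)
    (hab : a ≠ b) (hbc : b ≠ c) (hca : c ≠ a)
    (m1 : MVAdj a.1 b.1 ∨ MVAdj b.1 a.1)
    (m2 : MVAdj b.1 c.1 ∨ MVAdj c.1 b.1)
    (m3 : MVAdj c.1 a.1 ∨ MVAdj a.1 c.1) : False := by
  refine tri_not_acyclic hF (a := ⟨a, ha⟩) (b := ⟨b, hb⟩) (c := ⟨c, hc⟩) ?_ ?_ ?_
  · exact ⟨fun h => hab (by simpa using h), m1⟩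
  · exact ⟨fun h => hbc (by simpa using h), m2⟩
  · exact ⟨fun h => hca (by simpa using h), m3⟩

lemma keyZ {k p : ℕ} {G : SimpleGraph (Fin k × Fin p)} {F : Set (MVert k p G)}
    (hF : IsInducedForest G F) {i : Fin k} {a b c : MVert k p G}
    (ha : a ∈ F) (hb : b ∈ F) (hc : c ∈ F)
    (hab : a ≠ b) (hbc : b ≠ c) (hca : c ≠ a)
    {sa sb : Fin p} (pa : a.1 = MV.z i sa) (pb : b.1 = MV.z i sb)
    (pc : (∃ s, c.1 = MV.z i s) ∨ c.1 = MV.ax i ∨ c.1 = MV.ay i) : False := by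
  have hs : sa ≠ sb := by
    intro h; exact hab (Subtype.ext (by rw [pa, pb, h]))
  refine triF hF ha hb hc hab hbc hca ?_ ?_ ?_
  · left; rw [pa, pb]; exact ⟨rfl, hs⟩
  · rcases pc with ⟨sc, pc⟩ | pc | pc
    · have h1 : sb ≠ sc := by
        intro h; exact hbc (Subtype.ext (by rw [pb, pc, h]))
      left; rw [pb, pc]; exact ⟨rfl, h1⟩
    · right; rw [pb, pc]; exact rfl
    · right; rw [pb, pc]; exact rfl
  · rcases pc with ⟨sc, pc⟩ | pc | pc
    · have h1 : sc ≠ sa := by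
        intro h; exact hca (Subtype.ext (by rw [pa, pc, h]))
      left; rw [pa, pc]; exact ⟨rfl, h1⟩
    · left; rw [pa, pc]; exact rfl
    · left; rw [pa, pc]; exact rfl

lemma keyZ' {k p : ℕ} {G : SimpleGraph (Fin k × Fin p)} {F : Set (MVert k p G)}
    (hF : IsInducedForest G F) {i : Fin k} {e : MV k p}
    (he : e = MV.ax i ∨ e = MV.ay i) {a b c : MVert k p G}
    (ha : a ∈ F) (hb : b ∈ F) (hc : c ∈ F)
    (hab : a ≠ b) (hbc : b ≠ c) (hca : c ≠ a)
    (pa : (∃ s, a.1 = MV.z i s) ∨ a.1 = e)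
    (pb : (∃ s, b.1 = MV.z i s) ∨ b.1 = e)
    (pc : (∃ s, c.1 = MV.z i s) ∨ c.1 = e) : False := by
  have conv : ∀ x : MVert k p G, x.1 = e → x.1 = MV.ax i ∨ x.1 = MV.ay i := by
    rintro x hx; rcases he with h | h
    · left; rw [hx, h]
    · right; rw [hx, h]
  rcases pa with ⟨sa, pa⟩ | pa
  · rcases pb with ⟨sb, pb⟩ | pb
    · exact keyZ hF ha hb hc hab hbc hca pa pb (pc.imp id (conv c))
    · rcases pc with ⟨sc, pc⟩ | pc
      · exact keyZ hF ha hc hb hca.symm hbc.symm hab.symm pa pc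
          (Or.inr (conv b pb))
      · exact hbc (Subtype.ext (pb.trans pc.symm))
  · rcases pb with ⟨sb, pb⟩ | pb
    · rcases pc with ⟨sc, pc⟩ | pc
      · exact keyZ hF hb hc ha hbc hca hab pb pc (Or.inr (conv a pa))
      · exact hca (Subtype.ext (pc.trans pa.symm))
    · exact hab (Subtype.ext (pa.trans pb.symm))

lemma keyR {k p : ℕ} {G : SimpleGraph (Fin k × Fin p)} {F : Set (MVert k p G)}
    (hF : IsInducedForest G F) {i j : Fin k} {a b c : MVert k p G}
    (ha : a ∈ F) (hb : b ∈ F) (hc : c ∈ F)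
    (hab : a ≠ b) (hbc : b ≠ c) (hca : c ≠ a)
    {sa ta sb tb : Fin p} (pa : a.1 = MV.r i j sa ta) (pb : b.1 = MV.r i j sb tb)
    (pc : (∃ s t, c.1 = MV.r i j s t) ∨ c.1 = MV.bx i j ∨ c.1 = MV.byy i j) :
    False := by
  have hst : ∀ (x y : MVert k p G) (sx tx sy ty : Fin p), x ≠ y →
      x.1 = MV.r i j sx tx → y.1 = MV.r i j sy ty → sx ≠ sy ∨ tx ≠ ty := by
    intro x y sx tx sy ty hxy px py
    by_contra h
    push_neg at h
    exact hxy (Subtype.ext (by rw [px, py, h.1, h.2]))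
  refine triF hF ha hb hc hab hbc hca ?_ ?_ ?_
  · left; rw [pa, pb]; exact ⟨rfl, rfl, hst a b _ _ _ _ hab pa pb⟩
  · rcases pc with ⟨sc, tc, pc⟩ | pc | pc
    · left; rw [pb, pc]; exact ⟨rfl, rfl, hst b c _ _ _ _ hbc pb pc⟩
    · right; rw [pb, pc]; exact ⟨rfl, rfl⟩
    · right; rw [pb, pc]; exact ⟨rfl, rfl⟩
  · rcases pc with ⟨sc, tc, pc⟩ | pc | pc
    · left; rw [pa, pc]; exact ⟨rfl, rfl, hst c a _ _ _ _ hca pc pa⟩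
    · left; rw [pa, pc]; exact ⟨rfl, rfl⟩
    · left; rw [pa, pc]; exact ⟨rfl, rfl⟩

lemma keyR' {k p : ℕ} {G : SimpleGraph (Fin k × Fin p)} {F : Set (MVert k p G)}
    (hF : IsInducedForest G F) {i j : Fin k} {e : MV k p}
    (he : e = MV.bx i j ∨ e = MV.byy i j) {a b c : MVert k p G}
    (ha : a ∈ F) (hb : b ∈ F) (hc : c ∈ F)
    (hab : a ≠ b) (hbc : b ≠ c) (hca : c ≠ a)
    (pa : (∃ s t, a.1 = MV.r i j s t) ∨ a.1 = e)
    (pb : (∃ s t, b.1 = MV.r i j s t) ∨ b.1 = e)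
    (pc : (∃ s t, c.1 = MV.r i j s t) ∨ c.1 = e) : False := by
  have conv : ∀ x : MVert k p G, x.1 = e → x.1 = MV.bx i j ∨ x.1 = MV.byy i j := by
    rintro x hx; rcases he with h | h
    · left; rw [hx, h]
    · right; rw [hx, h]
  rcases pa with ⟨sa, ta, pa⟩ | pa
  · rcases pb with ⟨sb, tb, pb⟩ | pb
    · exact keyR hF ha hb hc hab hbc hca pa pb (pc.imp id (conv c))
    · rcases pc with ⟨sc, tc, pc⟩ | pc
      · exact keyR hF ha hc hb hca.symm hbc.symm hab.symm pa pc
          (Or.inr (conv b pb))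
      · exact hbc (Subtype.ext (pb.trans pc.symm))
  · rcases pb with ⟨sb, tb, pb⟩ | pb
    · rcases pc with ⟨sc, tc, pc⟩ | pc
      · exact keyR hF hb hc ha hbc hca hab pb pc (Or.inr (conv a pa))
      · exact hca (Subtype.ext (pc.trans pa.symm))
    · exact hab (Subtype.ext (pa.trans pb.symm))

/-- if an induced forest in `G'` contains three vertices of `Z_{+α}(i)`, then
these include `α^i_x` and `α^i_y`; likewise for `R_{+α}(i,j)`. -/
theorem stmt9 (k p : ℕ) (hk : 2 ≤ k) (hp : 1 ≤ p) (G : SimpleGraph (Fin k × Fin p))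
    (F : Set (MVert k p G)) (hF : IsInducedForest G F) :
    (∀ i : Fin k, 3 ≤ (F ∩ ZAset G i).ncard →
      (∃ v ∈ F, v.1 = MV.ax i) ∧ (∃ v ∈ F, v.1 = MV.ay i)) ∧
    (∀ i j : Fin k, i < j → 3 ≤ (F ∩ RAset G i j).ncard →
      (∃ v ∈ F, v.1 = MV.bx i j) ∧ (∃ v ∈ F, v.1 = MV.byy i j)) := by
  constructor
  · intro i hcard
    have hfin : (F ∩ ZAset G i).Finite :=
      Set.finite_of_ncard_ne_zero (by omega)
    obtain ⟨a, ha, b, hb, c, hc, hab, hac, hbc⟩ :=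
      (Set.two_lt_ncard hfin).1 (by omega)
    have shape : ∀ x : MVert k p G, x ∈ F ∩ ZAset G i →
        (∃ s, x.1 = MV.z i s) ∨ x.1 = MV.ax i ∨ x.1 = MV.ay i := by
      rintro x ⟨-, hz | hax⟩
      · exact Or.inl hz
      · exact Or.inr hax
    constructor
    · by_contra hx
      have noax : ∀ x : MVert k p G, x ∈ F ∩ ZAset G i →
          (∃ s, x.1 = MV.z i s) ∨ x.1 = MV.ay i := by
        intro x hxm
        rcases shape x hxm with h | h | h
        · exact Or.inl h
        · exact absurd ⟨x, hxm.1, h⟩ hx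
        · exact Or.inr h
      exact keyZ' hF (Or.inr rfl) ha.1 hb.1 hc.1 hab hbc hac.symm
        (noax a ha) (noax b hb) (noax c hc)
    · by_contra hy
      have noay : ∀ x : MVert k p G, x ∈ F ∩ ZAset G i →
          (∃ s, x.1 = MV.z i s) ∨ x.1 = MV.ax i := by
        intro x hxm
        rcases shape x hxm with h | h | h
        · exact Or.inl h
        · exact Or.inr h
        · exact absurd ⟨x, hxm.1, h⟩ hy
      exact keyZ' hF (Or.inl rfl) ha.1 hb.1 hc.1 hab hbc hac.symm
        (noay a ha) (noay b hb) (noay c hc)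
  · intro i j hij hcard
    have hfin : (F ∩ RAset G i j).Finite :=
      Set.finite_of_ncard_ne_zero (by omega)
    obtain ⟨a, ha, b, hb, c, hc, hab, hac, hbc⟩ :=
      (Set.two_lt_ncard hfin).1 (by omega)
    have shape : ∀ x : MVert k p G, x ∈ F ∩ RAset G i j →
        (∃ s t, x.1 = MV.r i j s t) ∨ x.1 = MV.bx i j ∨ x.1 = MV.byy i j := by
      rintro x ⟨-, hz | hbb⟩
      · exact Or.inl hz
      · exact Or.inr hbb
    constructor
    · by_contra hx
      have nobx : ∀ x : MVert k p G, x ∈ F ∩ RAset G i j →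
          (∃ s t, x.1 = MV.r i j s t) ∨ x.1 = MV.byy i j := by
        intro x hxm
        rcases shape x hxm with h | h | h
        · exact Or.inl h
        · exact absurd ⟨x, hxm.1, h⟩ hx
        · exact Or.inr h
      exact keyR' hF (Or.inr rfl) ha.1 hb.1 hc.1 hab hbc hac.symm
        (nobx a ha) (nobx b hb) (nobx c hc)
    · by_contra hy
      have noby : ∀ x : MVert k p G, x ∈ F ∩ RAset G i j →
          (∃ s t, x.1 = MV.r i j s t) ∨ x.1 = MV.bx i j := by
        intro x hxm
        rcases shape x hxm with h | h | h
        · exact Or.inl h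
        · exact Or.inr h
        · exact absurd ⟨x, hxm.1, h⟩ hy
      exact keyR' hF (Or.inl rfl) ha.1 hb.1 hc.1 hab hbc hac.symm
        (noby a ha) (noby b hb) (noby c hc)
end

section
/- Let F be an induced forest in G' with exactly k' = 3k + 3·C(k,2) + 1 vertices. Then: (I) for each i ∈ [k], F ∩ Z_{+α}(i) = {α^i_x, α^i_y, z^i_s} for some s ∈ [p]; (II) for each 1 ≤ i < j ≤ k, F ∩ R_{+α}(i,j) = {α^{(i,j)}_x, α^{(i,j)}_y, r^{(i,j)}_{t,t'}} for some t, t' ∈ [p] with v^i_t v^j_{t'} ∈ E(G); and (III) β ∈ F. -/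
deriving instance DecidableEq for MV
deriving instance Fintype for MV

namespace Stmt10Aux

open SimpleGraph Finset

lemma tri {V : Type*} {H : SimpleGraph V} (hH : H.IsAcyclic) {a b c : V}
    (hab : H.Adj a b) (hbc : H.Adj b c) (hca : H.Adj c a) : False := by
  refine hH (Walk.cons hab (Walk.cons hbc (Walk.cons hca Walk.nil))) ?_
  have h1 := hab.ne; have h2 := hbc.ne; have h3 := hca.ne
  constructor
  · constructor
    · simp [Walk.isTrail_def, Sym2.eq, Sym2.rel_iff']
      aesop
    · simp
  · simp
    aesop

variable {k p : ℕ} {G : SimpleGraph (Fin k × Fin p)} {F : Set (MVert k p G)}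

lemma triF (hF : IsInducedForest G F) {a b c : MVert k p G} (ha : a ∈ F) (hb : b ∈ F)
    (hc : c ∈ F) (hab : (Gp G).Adj a b) (hbc : (Gp G).Adj b c) (hca : (Gp G).Adj c a) :
    False := by
  exact tri hF (a := ⟨a, ha⟩) (b := ⟨b, hb⟩) (c := ⟨c, hc⟩) hab hbc hca

lemma zadj {i : Fin k} {s : Fin p} {c a : MVert k p G} (hc : c ∈ ZAset G i)
    (ha : a.1 = MV.z i s) (hne : c ≠ a) : (Gp G).Adj c a := by
  refine ⟨hne, ?_⟩
  rcases hc with ⟨s', hs'⟩ | (hc | hc)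
  · refine Or.inl ?_; show MVAdj c.1 a.1; rw [hs', ha]
    exact ⟨rfl, fun h => hne (Subtype.ext (by rw [hs', ha, h]))⟩
  · refine Or.inl ?_; show MVAdj c.1 a.1; rw [hc, ha]; exact rfl
  · refine Or.inl ?_; show MVAdj c.1 a.1; rw [hc, ha]; exact rfl

lemma radj {i j : Fin k} {s : Fin p} {t : Fin p} {c a : MVert k p G} (hc : c ∈ RAset G i j)
    (ha : a.1 = MV.r i j s t) (hne : c ≠ a) : (Gp G).Adj c a := by
  refine ⟨hne, ?_⟩
  rcases hc with ⟨s', t', hs'⟩ | (hc | hc)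
  · refine Or.inl ?_; show MVAdj c.1 a.1; rw [hs', ha]
    refine ⟨rfl, rfl, ?_⟩
    by_contra h
    push_neg at h
    exact hne (Subtype.ext (by rw [hs', ha, h.1, h.2]))
  · refine Or.inl ?_; show MVAdj c.1 a.1; rw [hc, ha]; exact ⟨rfl, rfl⟩
  · refine Or.inl ?_; show MVAdj c.1 a.1; rw [hc, ha]; exact ⟨rfl, rfl⟩

/-- Structure of a Z block. -/
lemma zblock (hF : IsInducedForest G F) (i : Fin k) :
    (F ∩ ZAset G i).ncard ≤ 3 ∧
    ((F ∩ ZAset G i).ncard = 3 → ∃ s : Fin p,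
      F ∩ ZAset G i = {v | v.1 = MV.ax i ∨ v.1 = MV.ay i ∨ v.1 = MV.z i s}) := by
  classical
  set Fz := F ∩ ZAset G i with hFzdef
  by_cases hzz : ∃ a ∈ Fz, ∃ b ∈ Fz, a ≠ b ∧ (∃ s, a.1 = MV.z i s) ∧ (∃ s, b.1 = MV.z i s)
  · obtain ⟨a, haF, b, hbF, hab, ⟨s, hsa⟩, ⟨s', hsb⟩⟩ := hzz
    have hsub : Fz ⊆ {a, b} := by
      intro c hcF
      by_contra hc
      simp only [Set.mem_insert_iff, Set.mem_singleton_iff, not_or] at hc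
      exact triF hF haF.1 hbF.1 hcF.1 (zadj haF.2 hsb hab) ((zadj hcF.2 hsb hc.2).symm)
        (zadj hcF.2 hsa hc.1)
    have h2 : Fz.ncard ≤ 2 := by
      refine le_trans (Set.ncard_le_ncard hsub (Set.toFinite _)) ?_
      refine le_trans (Set.ncard_insert_le _ _) ?_
      simp
    exact ⟨h2.trans (by norm_num), fun h3 => absurd (h3 ▸ h2) (by norm_num)⟩
  · push_neg at hzz
    have hss : ∀ a ∈ Fz, ∀ b ∈ Fz, (∃ s, a.1 = MV.z i s) → (∃ s, b.1 = MV.z i s) → a = b := by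
      intro a ha b hb pa pb
      by_contra h
      obtain ⟨s, hs⟩ := pb
      exact hzz a ha b hb h pa s hs
    set axel : MVert k p G := ⟨MV.ax i, trivial⟩ with haxel
    set ayel : MVert k p G := ⟨MV.ay i, trivial⟩ with hayel
    have hsub : Fz ⊆ insert axel (insert ayel (Fz ∩ Zset G i)) := by
      intro v hv
      rcases hv.2 with hz | (h1 | h1)
      · exact Set.mem_insert_iff.2 (Or.inr (Set.mem_insert_iff.2 (Or.inr ⟨hv, hz⟩)))
      · exact Set.mem_insert_iff.2 (Or.inl (Subtype.ext h1))
      · exact Set.mem_insert_iff.2 (Or.inr (Set.mem_insert_iff.2 (Or.inl (Subtype.ext h1))))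
    have hz1 : (Fz ∩ Zset G i).ncard ≤ 1 := by
      rw [Set.ncard_le_one (Set.toFinite _)]
      intro a ha b hb
      exact hss a ha.1 b hb.1 ha.2 hb.2
    have hbound : Fz.ncard ≤ 3 := by
      refine le_trans (Set.ncard_le_ncard hsub (Set.toFinite _)) ?_
      refine le_trans (Set.ncard_insert_le _ _) ?_
      have := Set.ncard_insert_le ayel (Fz ∩ Zset G i)
      omega
    refine ⟨hbound, fun h3 => ?_⟩
    have hax : axel ∈ Fz := by
      by_contra hax
      have hsub2 : Fz ⊆ insert ayel (Fz ∩ Zset G i) := by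
        intro v hv
        rcases hsub hv with h | h
        · exact absurd (h ▸ hv) hax
        · exact h
      have : Fz.ncard ≤ 2 := by
        refine le_trans (Set.ncard_le_ncard hsub2 (Set.toFinite _)) ?_
        have := Set.ncard_insert_le ayel (Fz ∩ Zset G i)
        omega
      omega
    have hay : ayel ∈ Fz := by
      by_contra hay
      have hsub2 : Fz ⊆ insert axel (Fz ∩ Zset G i) := by
        intro v hv
        rcases hsub hv with h | (h | h)
        · exact Set.mem_insert_iff.2 (Or.inl h)
        · exact absurd (h ▸ hv) hay
        · exact Set.mem_insert_iff.2 (Or.inr h)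
      have : Fz.ncard ≤ 2 := by
        refine le_trans (Set.ncard_le_ncard hsub2 (Set.toFinite _)) ?_
        have := Set.ncard_insert_le axel (Fz ∩ Zset G i)
        omega
      omega
    have hzel : ∃ zel ∈ Fz, ∃ s, zel.1 = MV.z i s := by
      by_contra hno
      push_neg at hno
      have hsub2 : Fz ⊆ insert axel (insert ayel (∅ : Set (MVert k p G))) := by
        intro v hv
        rcases hsub hv with h | (h | h)
        · exact Set.mem_insert_iff.2 (Or.inl h)
        · exact Set.mem_insert_iff.2 (Or.inr (Set.mem_insert_iff.2 (Or.inl h)))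
        · obtain ⟨s, hs⟩ := h.2; exact absurd hs (hno v hv s)
      have : Fz.ncard ≤ 2 := by
        refine le_trans (Set.ncard_le_ncard hsub2 (Set.toFinite _)) ?_
        refine le_trans (Set.ncard_insert_le _ _) ?_
        have := Set.ncard_insert_le ayel (∅ : Set (MVert k p G))
        simp only [Set.ncard_empty] at this
        omega
      omega
    obtain ⟨zel, hzelF, s, hzs⟩ := hzel
    refine ⟨s, ?_⟩
    apply Set.eq_of_subset_of_subset
    · intro v hv
      rcases hsub hv with h | (h | h)
      · exact Or.inl (by rw [h])
      · exact Or.inr (Or.inl (by rw [h]))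
      · have : v = zel := hss v hv zel hzelF h.2 ⟨s, hzs⟩
        exact Or.inr (Or.inr (by rw [this, hzs]))
    · intro v hv
      rcases hv with h | (h | h)
      · rwa [show v = axel from Subtype.ext h]
      · rwa [show v = ayel from Subtype.ext h]
      · rwa [show v = zel from Subtype.ext (by rw [h, hzs])]

/-- Structure of an R block with `i < j`. -/
lemma rblock (hF : IsInducedForest G F) {i j : Fin k} (hij : i < j) :
    (F ∩ RAset G i j).ncard ≤ 3 ∧
    ((F ∩ RAset G i j).ncard = 3 → ∃ t t' : Fin p, G.Adj (i, t) (j, t') ∧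
      F ∩ RAset G i j = {v | v.1 = MV.bx i j ∨ v.1 = MV.byy i j ∨ v.1 = MV.r i j t t'}) := by
  classical
  set Fz := F ∩ RAset G i j with hFzdef
  by_cases hzz : ∃ a ∈ Fz, ∃ b ∈ Fz, a ≠ b ∧ (∃ s t, a.1 = MV.r i j s t) ∧
      (∃ s t, b.1 = MV.r i j s t)
  · obtain ⟨a, haF, b, hbF, hab, ⟨s, t, hsa⟩, ⟨s', t', hsb⟩⟩ := hzz
    have hsub : Fz ⊆ {a, b} := by
      intro c hcF
      by_contra hc
      simp only [Set.mem_insert_iff, Set.mem_singleton_iff, not_or] at hc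
      exact triF hF haF.1 hbF.1 hcF.1 (radj haF.2 hsb hab) ((radj hcF.2 hsb hc.2).symm)
        (radj hcF.2 hsa hc.1)
    have h2 : Fz.ncard ≤ 2 := by
      refine le_trans (Set.ncard_le_ncard hsub (Set.toFinite _)) ?_
      refine le_trans (Set.ncard_insert_le _ _) ?_
      simp
    exact ⟨h2.trans (by norm_num), fun h3 => absurd (h3 ▸ h2) (by norm_num)⟩
  · push_neg at hzz
    have hss : ∀ a ∈ Fz, ∀ b ∈ Fz, (∃ s t, a.1 = MV.r i j s t) →
        (∃ s t, b.1 = MV.r i j s t) → a = b := by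
      intro a ha b hb pa pb
      by_contra h
      obtain ⟨s, t, hs⟩ := pb
      exact hzz a ha b hb h pa s t hs
    set axel : MVert k p G := ⟨MV.bx i j, hij⟩ with haxel
    set ayel : MVert k p G := ⟨MV.byy i j, hij⟩ with hayel
    have hsub : Fz ⊆ insert axel (insert ayel (Fz ∩ Rset G i j)) := by
      intro v hv
      rcases hv.2 with hz | (h1 | h1)
      · exact Set.mem_insert_iff.2 (Or.inr (Set.mem_insert_iff.2 (Or.inr ⟨hv, hz⟩)))
      · exact Set.mem_insert_iff.2 (Or.inl (Subtype.ext h1))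
      · exact Set.mem_insert_iff.2 (Or.inr (Set.mem_insert_iff.2 (Or.inl (Subtype.ext h1))))
    have hz1 : (Fz ∩ Rset G i j).ncard ≤ 1 := by
      rw [Set.ncard_le_one (Set.toFinite _)]
      intro a ha b hb
      exact hss a ha.1 b hb.1 ha.2 hb.2
    have hbound : Fz.ncard ≤ 3 := by
      refine le_trans (Set.ncard_le_ncard hsub (Set.toFinite _)) ?_
      refine le_trans (Set.ncard_insert_le _ _) ?_
      have := Set.ncard_insert_le ayel (Fz ∩ Rset G i j)
      omega
    refine ⟨hbound, fun h3 => ?_⟩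
    have hax : axel ∈ Fz := by
      by_contra hax
      have hsub2 : Fz ⊆ insert ayel (Fz ∩ Rset G i j) := by
        intro v hv
        rcases hsub hv with h | h
        · exact absurd (h ▸ hv) hax
        · exact h
      have : Fz.ncard ≤ 2 := by
        refine le_trans (Set.ncard_le_ncard hsub2 (Set.toFinite _)) ?_
        have := Set.ncard_insert_le ayel (Fz ∩ Rset G i j)
        omega
      omega
    have hay : ayel ∈ Fz := by
      by_contra hay
      have hsub2 : Fz ⊆ insert axel (Fz ∩ Rset G i j) := by
        intro v hv
        rcases hsub hv with h | (h | h)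
        · exact Set.mem_insert_iff.2 (Or.inl h)
        · exact absurd (h ▸ hv) hay
        · exact Set.mem_insert_iff.2 (Or.inr h)
      have : Fz.ncard ≤ 2 := by
        refine le_trans (Set.ncard_le_ncard hsub2 (Set.toFinite _)) ?_
        have := Set.ncard_insert_le axel (Fz ∩ Rset G i j)
        omega
      omega
    have hzel : ∃ zel ∈ Fz, ∃ s t, zel.1 = MV.r i j s t := by
      by_contra hno
      push_neg at hno
      have hsub2 : Fz ⊆ insert axel (insert ayel (∅ : Set (MVert k p G))) := by
        intro v hv
        rcases hsub hv with h | (h | h)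
        · exact Set.mem_insert_iff.2 (Or.inl h)
        · exact Set.mem_insert_iff.2 (Or.inr (Set.mem_insert_iff.2 (Or.inl h)))
        · obtain ⟨s, t, hst⟩ := h.2
          exact absurd hst (hno v hv s t)
      have : Fz.ncard ≤ 2 := by
        refine le_trans (Set.ncard_le_ncard hsub2 (Set.toFinite _)) ?_
        refine le_trans (Set.ncard_insert_le _ _) ?_
        have := Set.ncard_insert_le ayel (∅ : Set (MVert k p G))
        simp only [Set.ncard_empty] at this
        omega
      omega
    obtain ⟨zel, hzelF, s, t, hzs⟩ := hzel
    have hadj : G.Adj (i, s) (j, t) := by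
      have hv := zel.2
      rw [hzs] at hv
      exact hv.2
    refine ⟨s, t, hadj, ?_⟩
    apply Set.eq_of_subset_of_subset
    · intro v hv
      rcases hsub hv with h | (h | h)
      · exact Or.inl (by rw [h])
      · exact Or.inr (Or.inl (by rw [h]))
      · have : v = zel := hss v hv zel hzelF h.2 ⟨s, t, hzs⟩
        exact Or.inr (Or.inr (by rw [this, hzs]))
    · intro v hv
      rcases hv with h | (h | h)
      · rwa [show v = axel from Subtype.ext h]
      · rwa [show v = ayel from Subtype.ext h]
      · rwa [show v = zel from Subtype.ext (by rw [h, hzs])]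

lemma rblock_empty {i j : Fin k} (hij : ¬ i < j) : (F ∩ RAset G i j) = ∅ := by
  ext v
  simp only [Set.mem_inter_iff, Set.mem_empty_iff_false, iff_false, not_and]
  intro _
  intro hv
  rcases hv with ⟨s, t, h⟩ | (h | h)
  · have := v.2; rw [h] at this; exact hij this.1
  · have := v.2; rw [h] at this; exact hij this
  · have := v.2; rw [h] at this; exact hij this

lemma beta_bound : (F ∩ {v : MVert k p G | v.1 = MV.beta}).ncard ≤ 1 := by
  have hsub : F ∩ {v : MVert k p G | v.1 = MV.beta} ⊆ {⟨MV.beta, trivial⟩} := by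
    intro v hv
    exact Subtype.ext hv.2
  refine le_trans (Set.ncard_le_ncard hsub (Set.toFinite _)) ?_
  simp

/-- Label of a vertex name. -/
def lab {k p : ℕ} : MV k p → Option (Fin k ⊕ Fin k × Fin k)
  | MV.z i _ => some (Sum.inl i)
  | MV.ax i => some (Sum.inl i)
  | MV.ay i => some (Sum.inl i)
  | MV.r i j _ _ => some (Sum.inr (i, j))
  | MV.bx i j => some (Sum.inr (i, j))
  | MV.byy i j => some (Sum.inr (i, j))
  | MV.beta => none

lemma fib_none : {v : MVert k p G | lab v.1 = none} = {v | v.1 = MV.beta} := by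
  ext ⟨w, hw⟩
  cases w <;> simp [lab]

lemma fib_inl (i : Fin k) :
    {v : MVert k p G | lab v.1 = some (Sum.inl i)} = ZAset G i := by
  ext ⟨w, hw⟩
  cases w <;> simp [lab, ZAset, Zset]

lemma fib_inr (i j : Fin k) :
    {v : MVert k p G | lab v.1 = some (Sum.inr (i, j))} = RAset G i j := by
  ext ⟨w, hw⟩
  cases w <;> simp [lab, RAset, Rset, Prod.ext_iff]

end Stmt10Aux

open Stmt10Aux Finset in
/-- the exact shape of any induced forest in `G'` on
`k' = 3k + 3·C(k,2) + 1` vertices. -/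
theorem stmt10 (k p : ℕ) (hk : 2 ≤ k) (hp : 1 ≤ p) (G : SimpleGraph (Fin k × Fin p))
    (F : Set (MVert k p G)) (hF : IsInducedForest G F)
    (hcard : F.ncard = 3 * k + 3 * Nat.choose k 2 + 1) :
    (∀ i : Fin k, ∃ s : Fin p,
      F ∩ ZAset G i = {v | v.1 = MV.ax i ∨ v.1 = MV.ay i ∨ v.1 = MV.z i s}) ∧
    (∀ i j : Fin k, i < j → ∃ t t' : Fin p, G.Adj (i, t) (j, t') ∧
      F ∩ RAset G i j = {v | v.1 = MV.bx i j ∨ v.1 = MV.byy i j ∨ v.1 = MV.r i j t t'}) ∧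
    (∃ v ∈ F, v.1 = MV.beta) := by
  classical
  have hfinF : F.Finite := Set.toFinite _
  set S : Finset (MVert k p G) := hfinF.toFinset with hSdef
  have hS : S.card = F.ncard := (Set.ncard_eq_toFinset_card F hfinF).symm
  have hsum : S.card = ∑ l : Option (Fin k ⊕ Fin k × Fin k),
      (S.filter (fun v => lab v.1 = l)).card :=
    Finset.card_eq_sum_card_fiberwise (fun x _ => Finset.mem_univ _)
  have hfib : ∀ l, (S.filter (fun v => lab v.1 = l)).card
      = (F ∩ {v | lab v.1 = l}).ncard := by
    intro l
    rw [Set.ncard_eq_toFinset_card _ (Set.toFinite _)]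
    congr 1
    ext v
    simp only [Finset.mem_filter, hSdef, Set.Finite.mem_toFinset, Set.mem_inter_iff,
      Set.mem_setOf_eq]
  simp only [hfib] at hsum
  rw [Fintype.sum_option, Fintype.sum_sum_type] at hsum
  rw [fib_none] at hsum
  simp only [fib_inl, fib_inr] at hsum
  -- hsum : S.card = (F ∩ β).ncard + (∑ i, (F ∩ ZAset G i).ncard
  --          + ∑ q, (F ∩ RAset G q.1 q.2).ncard)
  rw [hS, hcard] at hsum
  have hZle : ∀ i : Fin k, (F ∩ ZAset G i).ncard ≤ 3 := fun i => (zblock hF i).1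
  have hRle : ∀ q : Fin k × Fin k,
      (F ∩ RAset G q.1 q.2).ncard ≤ (if q.1 < q.2 then 3 else 0) := by
    intro q
    by_cases h : q.1 < q.2
    · simpa [h] using (rblock hF h).1
    · simp [h, rblock_empty h]
  have hZsum : ∑ i : Fin k, (F ∩ ZAset G i).ncard ≤ 3 * k := by
    calc ∑ i : Fin k, (F ∩ ZAset G i).ncard ≤ ∑ _i : Fin k, 3 :=
          Finset.sum_le_sum (fun i _ => hZle i)
      _ = 3 * k := by simp [Nat.mul_comm]
  have hRtot : ∑ q : Fin k × Fin k, (if q.1 < q.2 then 3 else 0) = 3 * Nat.choose k 2 := by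
    rw [Fintype.sum_prod_type_right]
    have h1 : ∀ j : Fin k, ∑ i : Fin k, (if i < j then 3 else 0) = 3 * (j : ℕ) := by
      intro j
      rw [Finset.sum_ite, Finset.sum_const, Finset.sum_const]
      have : Finset.univ.filter (fun x : Fin k => x < j) = Finset.Iio j := by ext x; simp
      simp [this, Fin.card_Iio, Nat.mul_comm]
    simp only [h1]
    rw [← Finset.mul_sum]
    congr 1
    rw [Fin.sum_univ_eq_sum_range (fun j => j), Finset.sum_range_id, Nat.choose_two_right]
  have hRsum : ∑ q : Fin k × Fin k, (F ∩ RAset G q.1 q.2).ncard ≤ 3 * Nat.choose k 2 := by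
    rw [← hRtot]
    exact Finset.sum_le_sum (fun q _ => hRle q)
  have hBle : (F ∩ {v : MVert k p G | v.1 = MV.beta}).ncard ≤ 1 := beta_bound
  -- equality in each group
  have hZeq : ∑ i : Fin k, (F ∩ ZAset G i).ncard = 3 * k := by omega
  have hReq : ∑ q : Fin k × Fin k, (F ∩ RAset G q.1 q.2).ncard = 3 * Nat.choose k 2 := by
    omega
  have hBeq : (F ∩ {v : MVert k p G | v.1 = MV.beta}).ncard = 1 := by omega
  have hZall : ∀ i : Fin k, (F ∩ ZAset G i).ncard = 3 := by
    have := (Finset.sum_eq_sum_iff_of_le (s := Finset.univ)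
        (f := fun i : Fin k => (F ∩ ZAset G i).ncard) (g := fun _ => 3)
        (fun i _ => hZle i)).mp (by rw [hZeq]; simp [Nat.mul_comm])
    exact fun i => this i (Finset.mem_univ i)
  have hRall : ∀ q : Fin k × Fin k,
      (F ∩ RAset G q.1 q.2).ncard = (if q.1 < q.2 then 3 else 0) := by
    have := (Finset.sum_eq_sum_iff_of_le (s := Finset.univ)
        (f := fun q : Fin k × Fin k => (F ∩ RAset G q.1 q.2).ncard)
        (g := fun q => if q.1 < q.2 then 3 else 0)
        (fun q _ => hRle q)).mp (by rw [hReq, hRtot])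
    exact fun q => this q (Finset.mem_univ q)
  refine ⟨fun i => (zblock hF i).2 (hZall i), fun i j hij => ?_, ?_⟩
  · have h3 : (F ∩ RAset G i j).ncard = 3 := by simpa [hij] using hRall (i, j)
    exact (rblock hF hij).2 h3
  · have : (F ∩ {v : MVert k p G | v.1 = MV.beta}).Nonempty := by
      rw [← Set.ncard_pos (Set.toFinite _)] at *
      omega
    obtain ⟨v, hv⟩ := this
    exact ⟨v, hv.1, hv.2⟩
end

section
/- If G' has an induced forest on k' = 3k + 3·C(k,2) + 1 vertices, then there exist s_1, …, s_k ∈ [p] such that {v^1_{s_1}, …, v^k_{s_k}} is a multicolored clique in G. -/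
/- ======================= auxiliary material ======================= -/

open SimpleGraph

/-- An injective code showing `MV k p` is finite. -/
private def MVcode {k p : ℕ} : MV k p →
    (Fin k × Fin p) ⊕ (Fin k × Fin k × Fin p × Fin p) ⊕ (Fin k) ⊕ (Fin k) ⊕
      (Fin k × Fin k) ⊕ (Fin k × Fin k) ⊕ Unit
  | .z i s => .inl (i, s)
  | .r i j s t => .inr (.inl (i, j, s, t))
  | .ax i => .inr (.inr (.inl i))
  | .ay i => .inr (.inr (.inr (.inl i)))
  | .bx i j => .inr (.inr (.inr (.inr (.inl (i, j)))))
  | .byy i j => .inr (.inr (.inr (.inr (.inr (.inl (i, j))))))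
  | .beta => .inr (.inr (.inr (.inr (.inr (.inr ())))))

instance {k p : ℕ} : Finite (MV k p) :=
  Finite.of_injective MVcode (by
    intro a b h
    cases a <;> cases b <;> simp_all [MVcode])

lemma no_triangle {V : Type*} {H : SimpleGraph V} (h : H.IsAcyclic) {a b c : V}
    (hab : H.Adj a b) (hbc : H.Adj b c) (hca : H.Adj c a) : False := by
  refine h (Walk.cons hab (Walk.cons hbc (Walk.cons hca Walk.nil))) ?_
  simp [Walk.isCycle_def, Walk.isTrail_def, hab.ne, hbc.ne, hca.ne, hab.ne', hbc.ne', hca.ne',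
    Sym2.eq_iff]

lemma gp_adj {k p : ℕ} {G : SimpleGraph (Fin k × Fin p)} {a b : MVert k p G}
    (hne : a.1 ≠ b.1) (h : MVAdj a.1 b.1) : (Gp G).Adj a b := by
  rw [Gp, SimpleGraph.fromRel_adj]
  exact ⟨fun e => hne (congrArg Subtype.val e), Or.inl h⟩

lemma gp_adj' {k p : ℕ} {G : SimpleGraph (Fin k × Fin p)} {a b : MVert k p G}
    (hne : a.1 ≠ b.1) (h : MVAdj b.1 a.1) : (Gp G).Adj a b := by
  rw [Gp, SimpleGraph.fromRel_adj]
  exact ⟨fun e => hne (congrArg Subtype.val e), Or.inr h⟩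

lemma noTriF {k p : ℕ} {G : SimpleGraph (Fin k × Fin p)} {F : Set (MVert k p G)}
    (hF : IsInducedForest G F) {a b c : MVert k p G}
    (ha : a ∈ F) (hb : b ∈ F) (hc : c ∈ F)
    (hab : (Gp G).Adj a b) (hbc : (Gp G).Adj b c) (hca : (Gp G).Adj c a) : False := by
  refine no_triangle hF (a := ⟨a, ha⟩) (b := ⟨b, hb⟩) (c := ⟨c, hc⟩) ?_ ?_ ?_ <;>
    simpa [SimpleGraph.comap_adj] using (by assumption : _)

/-- classification of vertices into parts. -/
def cmap {k p : ℕ} {G : SimpleGraph (Fin k × Fin p)} (v : MVert k p G) :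
    Option (Fin k ⊕ Fin k × Fin k) :=
  match v.1 with
  | .z i _ => some (.inl i)
  | .r i j _ _ => some (.inr (i, j))
  | .ax i => some (.inl i)
  | .ay i => some (.inl i)
  | .bx i j => some (.inr (i, j))
  | .byy i j => some (.inr (i, j))
  | .beta => none

lemma cmap_none {k p : ℕ} {G : SimpleGraph (Fin k × Fin p)} {v : MVert k p G} :
    cmap v = none ↔ v.1 = MV.beta := by
  obtain ⟨w, hw⟩ := v
  cases w <;> simp [cmap]

lemma cmap_inl {k p : ℕ} {G : SimpleGraph (Fin k × Fin p)} {v : MVert k p G} {i : Fin k} :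
    cmap v = some (Sum.inl i) ↔
      (∃ s, v.1 = MV.z i s) ∨ v.1 = MV.ax i ∨ v.1 = MV.ay i := by
  obtain ⟨w, hw⟩ := v
  cases w <;> simp [cmap, eq_comm]

lemma cmap_inr {k p : ℕ} {G : SimpleGraph (Fin k × Fin p)} {v : MVert k p G} {i j : Fin k} :
    cmap v = some (Sum.inr (i, j)) ↔
      (∃ s t, v.1 = MV.r i j s t) ∨ v.1 = MV.bx i j ∨ v.1 = MV.byy i j := by
  obtain ⟨w, hw⟩ := v
  cases w <;> simp [cmap, eq_comm, Prod.ext_iff, and_assoc]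

/-- abstract counting lemma for one part. -/
lemma aux3 {α : Type*} [DecidableEq α] {t : Finset α} {P : α → Prop} [DecidablePred P] {x y : α}
    (hsub : ∀ v ∈ t, P v ∨ v = x ∨ v = y)
    (hK3 : ∀ a ∈ t, ∀ b ∈ t, ∀ c ∈ t, P a → P b → P c → a ≠ b → a ≠ c → b ≠ c → False)
    (hK2 : ∀ a ∈ t, ∀ b ∈ t, P a → P b → a ≠ b → x ∉ t ∧ y ∉ t) :
    t.card ≤ 3 ∧ (t.card = 3 → ∃ a ∈ t, P a) := by
  classical
  have hsplit : (t.filter P).card + (t.filter fun v => ¬ P v).card = t.card :=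
    Finset.card_filter_add_card_filter_not _
  have hA2 : (t.filter fun v => ¬ P v) ⊆ {x, y} := by
    intro v hv
    rw [Finset.mem_filter] at hv
    rcases hsub v hv.1 with h | h | h
    · exact absurd h hv.2
    · simp [h]
    · simp [h]
  have hAcard : (t.filter fun v => ¬ P v).card ≤ 2 := by
    calc (t.filter fun v => ¬ P v).card ≤ ({x, y} : Finset α).card := Finset.card_le_card hA2
    _ ≤ 2 := Finset.card_insert_le _ _ |>.trans (by simp)
  have hP2 : (t.filter P).card ≤ 2 := by
    by_contra hgt
    push_neg at hgt
    obtain ⟨u, hu, hcard⟩ := Finset.exists_subset_card_eq hgt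
    obtain ⟨a, b, c, hab, hac, hbc, rfl⟩ := Finset.card_eq_three.mp hcard
    have ha : a ∈ t.filter P := hu (by simp)
    have hb : b ∈ t.filter P := hu (by simp)
    have hc : c ∈ t.filter P := hu (by simp)
    rw [Finset.mem_filter] at ha hb hc
    exact hK3 a ha.1 b hb.1 c hc.1 ha.2 hb.2 hc.2 hab hac hbc
  rcases Nat.lt_or_ge (t.filter P).card 2 with h1 | h2
  · constructor
    · omega
    · intro h3
      have h1' : (t.filter P).card = 1 := by omega
      obtain ⟨a, ha⟩ := Finset.card_eq_one.mp h1'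
      have : a ∈ t.filter P := ha ▸ Finset.mem_singleton_self a
      rw [Finset.mem_filter] at this
      exact ⟨a, this.1, this.2⟩
  · obtain ⟨a, ha, b, hb, hab⟩ := Finset.one_lt_card.mp (by omega : 1 < (t.filter P).card)
    rw [Finset.mem_filter] at ha hb
    obtain ⟨hx, hy⟩ := hK2 a ha.1 b hb.1 ha.2 hb.2 hab
    have hAe : (t.filter fun v => ¬ P v) = ∅ := by
      rw [Finset.eq_empty_iff_forall_notMem]
      intro v hv
      have hvt := Finset.mem_of_mem_filter v hv
      have := hA2 hv
      rw [Finset.mem_insert, Finset.mem_singleton] at this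
      rcases this with rfl | rfl
      · exact hx hvt
      · exact hy hvt
    have : t.card ≤ 2 := by rw [← hsplit, hAe]; simpa using hP2
    exact ⟨by omega, by omega⟩

/-- if `G'` has an induced forest on `k' = 3k + 3·C(k,2) + 1` vertices,
then `G` has a multicolored clique. -/
theorem stmt12 (k p : ℕ) (hk : 2 ≤ k) (hp : 1 ≤ p) (G : SimpleGraph (Fin k × Fin p))
    (F : Set (MVert k p G)) (hF : IsInducedForest G F)
    (hcard : F.ncard = 3 * k + 3 * Nat.choose k 2 + 1) :
    ∃ s : Fin k → Fin p, ∀ i j : Fin k, i ≠ j → G.Adj (i, s i) (j, s j) := by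
  classical
  have hFin : F.Finite := Set.toFinite F
  set S : Finset (MVert k p G) := hFin.toFinset with hSdef
  have hmemS : ∀ v, v ∈ S ↔ v ∈ F := fun v => hFin.mem_toFinset
  have hScard : S.card = 3 * k + 3 * Nat.choose k 2 + 1 := by
    rw [← hcard, Set.ncard_eq_toFinset_card F hFin]
  -- the bound function
  set g : Option (Fin k ⊕ Fin k × Fin k) → ℕ := fun a =>
    match a with
    | none => 1
    | some (.inl _) => 3
    | some (.inr (i, j)) => if i < j then 3 else 0
    with hgdef
  -- fiberwise decomposition
  have hfibsum : S.card = ∑ a : Option (Fin k ⊕ Fin k × Fin k),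
      (S.filter fun v => cmap v = a).card :=
    Finset.card_eq_sum_card_fiberwise (fun v _ => Finset.mem_univ (cmap v))
  -- per-fiber bounds
  have hfibZ : ∀ i : Fin k,
      ((S.filter fun v => cmap v = some (Sum.inl i)).card ≤ 3 ∧
       ((S.filter fun v => cmap v = some (Sum.inl i)).card = 3 →
         ∃ s, (⟨MV.z i s, trivial⟩ : MVert k p G) ∈ F)) := by
    intro i
    have key := aux3 (t := S.filter fun v => cmap v = some (Sum.inl i))
      (P := fun v => ∃ s, v.1 = MV.z i s)
      (x := (⟨MV.ax i, trivial⟩ : MVert k p G)) (y := (⟨MV.ay i, trivial⟩ : MVert k p G))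
      ?_ ?_ ?_
    · refine ⟨key.1, fun h3 => ?_⟩
      obtain ⟨a, hat, s, hs⟩ := key.2 h3
      have haF : a ∈ F := (hmemS a).mp (Finset.mem_of_mem_filter a hat)
      refine ⟨s, ?_⟩
      have : (⟨MV.z i s, trivial⟩ : MVert k p G) = a := Subtype.ext hs.symm
      rwa [this]
    · intro v hv
      rw [Finset.mem_filter] at hv
      rcases cmap_inl.mp hv.2 with h | h | h
      · exact Or.inl h
      · exact Or.inr (Or.inl (Subtype.ext h))
      · exact Or.inr (Or.inr (Subtype.ext h))
    · rintro a hat b hbt c hct ⟨s1, hs1⟩ ⟨s2, hs2⟩ ⟨s3, hs3⟩ hab hac hbc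
      have h12 : s1 ≠ s2 := by
        rintro rfl; exact hab (Subtype.ext (hs1.trans hs2.symm))
      have h23 : s2 ≠ s3 := by
        rintro rfl; exact hbc (Subtype.ext (hs2.trans hs3.symm))
      have h31 : s3 ≠ s1 := by
        rintro rfl; exact hac (Subtype.ext (hs1.trans hs3.symm))
      have haF := (hmemS a).mp (Finset.mem_of_mem_filter a hat)
      have hbF := (hmemS b).mp (Finset.mem_of_mem_filter b hbt)
      have hcF := (hmemS c).mp (Finset.mem_of_mem_filter c hct)
      refine noTriF hF haF hbF hcF ?_ ?_ ?_
      · exact gp_adj (by rw [hs1, hs2]; simp [h12]) (by rw [hs1, hs2]; exact ⟨rfl, h12⟩)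
      · exact gp_adj (by rw [hs2, hs3]; simp [h23]) (by rw [hs2, hs3]; exact ⟨rfl, h23⟩)
      · exact gp_adj (by rw [hs3, hs1]; simp [h31]) (by rw [hs3, hs1]; exact ⟨rfl, h31⟩)
    · rintro a hat b hbt ⟨s1, hs1⟩ ⟨s2, hs2⟩ hab
      have h12 : s1 ≠ s2 := by
        rintro rfl; exact hab (Subtype.ext (hs1.trans hs2.symm))
      have haF := (hmemS a).mp (Finset.mem_of_mem_filter a hat)
      have hbF := (hmemS b).mp (Finset.mem_of_mem_filter b hbt)
      constructor <;>
      · intro hxt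
        have hxF := (hmemS _).mp (Finset.mem_of_mem_filter _ hxt)
        refine noTriF hF haF hbF hxF ?_ ?_ ?_
        · exact gp_adj (by rw [hs1, hs2]; simp [h12]) (by rw [hs1, hs2]; exact ⟨rfl, h12⟩)
        · exact gp_adj' (by rw [hs2]; simp) (by rw [hs2]; exact rfl)
        · exact gp_adj (by rw [hs1]; simp) (by rw [hs1]; exact rfl)
  have hfibR : ∀ i j : Fin k, i < j →
      ((S.filter fun v => cmap v = some (Sum.inr (i, j))).card ≤ 3 ∧
       ((S.filter fun v => cmap v = some (Sum.inr (i, j))).card = 3 →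
         ∃ v ∈ F, ∃ s t, v.1 = MV.r i j s t)) := by
    intro i j hij
    have key := aux3 (t := S.filter fun v => cmap v = some (Sum.inr (i, j)))
      (P := fun v => ∃ s t, v.1 = MV.r i j s t)
      (x := (⟨MV.bx i j, hij⟩ : MVert k p G)) (y := (⟨MV.byy i j, hij⟩ : MVert k p G))
      ?_ ?_ ?_
    · refine ⟨key.1, fun h3 => ?_⟩
      obtain ⟨a, hat, s, t, hst⟩ := key.2 h3
      exact ⟨a, (hmemS a).mp (Finset.mem_of_mem_filter a hat), s, t, hst⟩
    · intro v hv
      rw [Finset.mem_filter] at hv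
      rcases cmap_inr.mp hv.2 with h | h | h
      · exact Or.inl h
      · exact Or.inr (Or.inl (Subtype.ext h))
      · exact Or.inr (Or.inr (Subtype.ext h))
    · rintro a hat b hbt c hct ⟨s1, t1, hs1⟩ ⟨s2, t2, hs2⟩ ⟨s3, t3, hs3⟩ hab hac hbc
      have h12 : s1 ≠ s2 ∨ t1 ≠ t2 := by
        by_contra h; push_neg at h
        exact hab (Subtype.ext (by rw [hs1, hs2, h.1, h.2]))
      have h23 : s2 ≠ s3 ∨ t2 ≠ t3 := by
        by_contra h; push_neg at h
        exact hbc (Subtype.ext (by rw [hs2, hs3, h.1, h.2]))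
      have h31 : s3 ≠ s1 ∨ t3 ≠ t1 := by
        by_contra h; push_neg at h
        exact hac (Subtype.ext (by rw [hs1, hs3, h.1, h.2]))
      have haF := (hmemS a).mp (Finset.mem_of_mem_filter a hat)
      have hbF := (hmemS b).mp (Finset.mem_of_mem_filter b hbt)
      have hcF := (hmemS c).mp (Finset.mem_of_mem_filter c hct)
      refine noTriF hF haF hbF hcF ?_ ?_ ?_
      · exact gp_adj (by rw [hs1, hs2]; simp; tauto) (by rw [hs1, hs2]; exact ⟨rfl, rfl, h12⟩)
      · exact gp_adj (by rw [hs2, hs3]; simp; tauto) (by rw [hs2, hs3]; exact ⟨rfl, rfl, h23⟩)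
      · exact gp_adj (by rw [hs3, hs1]; simp; tauto) (by rw [hs3, hs1]; exact ⟨rfl, rfl, h31⟩)
    · rintro a hat b hbt ⟨s1, t1, hs1⟩ ⟨s2, t2, hs2⟩ hab
      have h12 : s1 ≠ s2 ∨ t1 ≠ t2 := by
        by_contra h; push_neg at h
        exact hab (Subtype.ext (by rw [hs1, hs2, h.1, h.2]))
      have haF := (hmemS a).mp (Finset.mem_of_mem_filter a hat)
      have hbF := (hmemS b).mp (Finset.mem_of_mem_filter b hbt)
      constructor <;>
      · intro hxt
        have hxF := (hmemS _).mp (Finset.mem_of_mem_filter _ hxt)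
        refine noTriF hF haF hbF hxF ?_ ?_ ?_
        · exact gp_adj (by rw [hs1, hs2]; simp; tauto) (by rw [hs1, hs2]; exact ⟨rfl, rfl, h12⟩)
        · exact gp_adj' (by rw [hs2]; simp) (by rw [hs2]; exact ⟨rfl, rfl⟩)
        · exact gp_adj (by rw [hs1]; simp) (by rw [hs1]; exact ⟨rfl, rfl⟩)
  have hfibRempty : ∀ i j : Fin k, ¬ i < j →
      (S.filter fun v => cmap v = some (Sum.inr (i, j))) = ∅ := by
    intro i j hij
    rw [Finset.eq_empty_iff_forall_notMem]
    intro v hv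
    rw [Finset.mem_filter] at hv
    rcases cmap_inr.mp hv.2 with ⟨s, t, h⟩ | h | h
    · have := v.2; rw [h] at this; exact hij this.1
    · have := v.2; rw [h] at this; exact hij this
    · have := v.2; rw [h] at this; exact hij this
  have hfibbeta : (S.filter fun v => cmap v = none).card ≤ 1 ∧
      ((S.filter fun v => cmap v = none).card = 1 →
        (⟨MV.beta, trivial⟩ : MVert k p G) ∈ F) := by
    have hsub : (S.filter fun v => cmap v = none) ⊆ {(⟨MV.beta, trivial⟩ : MVert k p G)} := by
      intro v hv
      rw [Finset.mem_filter] at hv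
      rw [Finset.mem_singleton]
      exact Subtype.ext (cmap_none.mp hv.2)
    constructor
    · exact (Finset.card_le_card hsub).trans (by simp)
    · intro h1
      obtain ⟨a, ha⟩ := Finset.card_eq_one.mp h1
      have hat : a ∈ S.filter fun v => cmap v = none := ha ▸ Finset.mem_singleton_self a
      have := hsub hat
      rw [Finset.mem_singleton] at this
      rw [← this]
      exact (hmemS a).mp (Finset.mem_of_mem_filter a hat)
  -- per-fiber bound
  have hble : ∀ a ∈ (Finset.univ : Finset (Option (Fin k ⊕ Fin k × Fin k))),
      (S.filter fun v => cmap v = a).card ≤ g a := by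
    rintro (_ | a | ⟨i, j⟩) -
    · exact hfibbeta.1
    · exact (hfibZ a).1
    · by_cases hij : i < j
      · simpa [hgdef, hij] using (hfibR i j hij).1
      · simp [hgdef, hij, hfibRempty i j hij]
  -- total of bounds
  have hgsum : ∑ a : Option (Fin k ⊕ Fin k × Fin k), g a
      = 3 * k + 3 * Nat.choose k 2 + 1 := by
    rw [Fintype.sum_option, Fintype.sum_sum_type]
    have h1 : ∑ i : Fin k, g (some (Sum.inl i)) = 3 * k := by
      simp [hgdef, Finset.sum_const, mul_comm]
    have inner : ∀ j : Fin k, (∑ i : Fin k, if i < j then 3 else 0) = 3 * (j : ℕ) := by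
      intro j
      have hIio : (Finset.univ.filter fun i : Fin k => i < j) = Finset.Iio j := by
        ext x; simp
      rw [Finset.sum_ite, Finset.sum_const, Finset.sum_const, hIio, Fin.card_Iio,
        smul_eq_mul, smul_eq_mul, mul_zero, add_zero, mul_comm]
    have h2 : ∑ ij : Fin k × Fin k, g (some (Sum.inr ij)) = 3 * Nat.choose k 2 := by
      have hg2 : ∀ ij : Fin k × Fin k, g (some (Sum.inr ij)) = if ij.1 < ij.2 then 3 else 0 := by
        rintro ⟨i, j⟩; rfl
      simp_rw [hg2]
      rw [Fintype.sum_prod_type_right]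
      simp_rw [inner]
      rw [← Finset.mul_sum]
      congr 1
      rw [Fin.sum_univ_eq_sum_range (fun i => i) k, Finset.sum_range_id, Nat.choose_two_right]
    rw [h1, h2]
    have : g none = 1 := rfl
    rw [this]
    omega
  -- equality in every fiber
  have htot : ∑ a : Option (Fin k ⊕ Fin k × Fin k), (S.filter fun v => cmap v = a).card
      = ∑ a : Option (Fin k ⊕ Fin k × Fin k), g a := by
    rw [← hfibsum, hScard, hgsum]
  have heq := (Finset.sum_eq_sum_iff_of_le hble).mp htot
  have hbeta : (⟨MV.beta, trivial⟩ : MVert k p G) ∈ F := by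
    apply hfibbeta.2
    have := heq none (Finset.mem_univ _)
    simpa using this
  have hz : ∀ i : Fin k, ∃ s, (⟨MV.z i s, trivial⟩ : MVert k p G) ∈ F := by
    intro i
    apply (hfibZ i).2
    have := heq (some (Sum.inl i)) (Finset.mem_univ _)
    simpa using this
  have hrex : ∀ i j : Fin k, i < j → ∃ v ∈ F, ∃ s t, v.1 = MV.r i j s t := by
    intro i j hij
    apply (hfibR i j hij).2
    have := heq (some (Sum.inr (i, j))) (Finset.mem_univ _)
    have hg : g (some (Sum.inr (i, j))) = 3 := by
      show (if i < j then 3 else 0) = 3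
      simp [hij]
    rwa [hg] at this
  -- the selector
  set sf : Fin k → Fin p := fun i => Classical.choose (hz i) with hsf
  have hzf : ∀ i : Fin k, (⟨MV.z i (sf i), trivial⟩ : MVert k p G) ∈ F :=
    fun i => Classical.choose_spec (hz i)
  have main : ∀ i j : Fin k, i < j → G.Adj (i, sf i) (j, sf j) := by
    intro i j hij
    obtain ⟨v, hvF, a, b, hv⟩ := hrex i j hij
    have hval : i < j ∧ G.Adj (i, a) (j, b) := by
      have := v.2
      rwa [hv] at this
    have hbr : (Gp G).Adj v ⟨MV.beta, trivial⟩ := by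
      refine gp_adj' ?_ ?_
      · rw [hv]; simp
      · rw [hv]; exact trivial
    have ha : a = sf i := by
      by_contra hne
      refine noTriF hF hbeta (hzf i) hvF ?_ ?_ hbr
      · exact gp_adj (by simp) trivial
      · refine gp_adj ?_ ?_
        · rw [hv]; simp
        · rw [hv]; exact Or.inl ⟨rfl, fun h => hne h.symm⟩
    have hb : b = sf j := by
      by_contra hne
      refine noTriF hF hbeta (hzf j) hvF ?_ ?_ hbr
      · exact gp_adj (by simp) trivial
      · refine gp_adj ?_ ?_
        · rw [hv]; simp
        · rw [hv]; exact Or.inr ⟨rfl, fun h => hne h.symm⟩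
    rw [ha, hb] at hval
    exact hval.2
  refine ⟨sf, fun i j hne => ?_⟩
  rcases lt_or_gt_of_ne hne with h | h
  · exact main i j h
  · exact (main j i h).symm
end
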